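/- arXiv:2202.03051 — 16 statements merged into one kernel-verified Lean document; each statement's English description precedes it below -/
import Mathlib

section
/- Let f be a non-negative m-monotone submodular set function on a finite ground set 𝒩, let O ⊆ 𝒩 be a fixed (deterministic) set, and let D be a random subset of 𝒩, i.e., a probability distribution over subsets of 𝒩. Then E[f(O ∪ D)] ≥ (1 − (1 − m)·max_{u∈𝒩} Pr[u ∈ D]) · f(O). -/
/-- A set function on a finite ground set is submodular if the marginal contribution of an
element can only decrease when the set grows. -/
def Submodular {α : Type*} [Fintype α] [DecidableEq α] (f : Finset α → ℝ) : Prop :=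
  ∀ S T : Finset α, S ⊆ T → ∀ u, u ∉ T →
    f (insert u T) - f T ≤ f (insert u S) - f S

/-- A set function is `m`-monotone if `m · f(S) ≤ f(T)` whenever `S ⊆ T`. -/
def MMonotone {α : Type*} [Fintype α] [DecidableEq α] (m : ℝ) (f : Finset α → ℝ) : Prop :=
  ∀ S T : Finset α, S ⊆ T → m * f S ≤ f T

/-!
Write `g S = f (O ∪ S)` and list the ground set as `u₁, …, uₙ` in decreasing order of
`xᵢ = Pr[uᵢ ∈ D]`, with prefixes `Uᵢ = {u₁, …, uᵢ}`. By submodularity,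
`g D ≥ g ∅ + ∑ᵢ [uᵢ ∈ D] (g Uᵢ - g Uᵢ₋₁)`, so `E[g D] ≥ g ∅ + ∑ᵢ xᵢ (g Uᵢ - g Uᵢ₋₁)`.
Summing by parts, the last sum is `∑ᵢ (xᵢ - xᵢ₊₁) (g Uᵢ - g ∅)` with nonnegative coefficients
summing to `x₁`, and `m`-monotonicity gives `g Uᵢ - g ∅ ≥ -(1 - m) g ∅`.
-/

open Finset

section Chain

variable {α : Type*} [DecidableEq α]

/-- The marginal gains of `g` along the chain that adds the elements of the list to `B` one at a
time, each gain weighted by `w` of the element added. -/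
def chainGain (g : Finset α → ℝ) (w : α → ℝ) : List α → Finset α → ℝ
  | [], _ => 0
  | a :: l, B => w a * (g (insert a B) - g B) + chainGain g w l (insert a B)

theorem chainGain_sum_mul {ι : Type*} (g : Finset α → ℝ) (s : Finset ι) (c : ι → ℝ)
    (w : ι → α → ℝ) (l : List α) (B : Finset α) :
    chainGain g (fun a => ∑ i ∈ s, c i * w i a) l B = ∑ i ∈ s, c i * chainGain g (w i) l B := by
  induction l generalizing B with
  | nil => simp [chainGain]
  | cons a l ih =>
    simp only [chainGain, ih, sum_mul, mul_add, sum_add_distrib, mul_assoc]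

theorem mul_sub_le_chainGain (g : Finset α → ℝ) {L : ℝ} (hL : ∀ S, L ≤ g S) {w : α → ℝ}
    {l : List α} (hl : l.Pairwise fun a b => w b ≤ w a) {c : ℝ} (hc : 0 ≤ c)
    (hw : ∀ a ∈ l, 0 ≤ w a ∧ w a ≤ c) (B : Finset α) :
    c * (L - g B) ≤ chainGain g w l B := by
  induction l generalizing c B with
  | nil => exact mul_nonpos_of_nonneg_of_nonpos hc (sub_nonpos.2 (hL B))
  | cons a l ih =>
    obtain ⟨hwa, hl⟩ := List.pairwise_cons.1 hl
    obtain ⟨ha0, hac⟩ := hw a List.mem_cons_self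
    have htail := ih hl ha0 (fun b hb => ⟨(hw b (List.mem_cons_of_mem a hb)).1, hwa b hb⟩)
      (insert a B)
    have hdrop := mul_nonpos_of_nonneg_of_nonpos (sub_nonneg.2 hac) (sub_nonpos.2 (hL B))
    simp only [chainGain]
    linarith

end Chain

theorem List.exists_forall_mem_pairwise_antitone {α : Type*} [Fintype α] (x : α → ℝ) :
    ∃ l : List α, (∀ a, a ∈ l) ∧ l.Pairwise fun a b => x b ≤ x a := by
  refine ⟨univ.toList.mergeSort fun a b => decide (x b ≤ x a), fun a => by simp, ?_⟩
  simpa using List.pairwise_mergeSort (le := fun a b => decide (x b ≤ x a))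
    (fun a b c hab hbc => by simp only [decide_eq_true_eq] at *; exact hbc.trans hab)
    (fun a b => by simpa using le_total (x b) (x a)) univ.toList

namespace Submodular

variable {α : Type*} [Fintype α] [DecidableEq α] {g : Finset α → ℝ}

theorem comp_union (hg : Submodular g) (O : Finset α) : Submodular fun S => g (O ∪ S) := by
  intro S T hST u hu
  by_cases huO : u ∈ O
  · simp only [union_insert, insert_eq_of_mem (mem_union_left _ huO), sub_self, le_refl]
  · simpa [union_insert] using
      hg (O ∪ S) (O ∪ T) (union_subset_union_right hST) u (by simp [huO, hu])

theorem add_chainGain_indicator_le (hg : Submodular g) (l : List α) {B S : Finset α}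
    (hS : ∀ a ∈ S, a ∈ B ∨ a ∈ l) :
    g B + chainGain g (fun a => if a ∈ S then 1 else 0) l B ≤ g (B ∪ S) := by
  induction l generalizing B with
  | nil =>
    have hSB : S ⊆ B := fun a ha => (hS a ha).resolve_right List.not_mem_nil
    simp [chainGain, union_eq_left.2 hSB]
  | cons a l ih =>
    have htail := ih (B := insert a B) fun b hb => by
      rcases hS b hb with h | h
      · exact .inl (mem_insert_of_mem h)
      · rcases List.mem_cons.1 h with rfl | h
        exacts [.inl (mem_insert_self b B), .inr h]
    rw [insert_union] at htail
    by_cases haS : a ∈ S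
    · rw [insert_eq_of_mem (mem_union_right B haS)] at htail
      simp only [chainGain, if_pos haS]
      linarith
    · have hmarg : g (insert a (B ∪ S)) - g (B ∪ S) ≤ g (insert a B) - g B := by
        by_cases haB : a ∈ B
        · simp [insert_eq_of_mem haB, insert_eq_of_mem (mem_union_left S haB)]
        · exact hg _ _ subset_union_left a (by simp [haB, haS])
      simp only [chainGain, if_neg haS]
      linarith

theorem add_chainGain_le_expectation (hg : Submodular g) {l : List α} (hl : ∀ a, a ∈ l)
    {p : Finset α → ℝ} (hp : ∀ S, 0 ≤ p S) (hp1 : ∑ S, p S = 1) :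
    g ∅ + chainGain g (fun u => ∑ S, if u ∈ S then p S else 0) l ∅ ≤ ∑ S, p S * g S := by
  have hpoint (S : Finset α) :
      g ∅ + chainGain g (fun a => if a ∈ S then 1 else 0) l ∅ ≤ g S := by
    simpa using hg.add_chainGain_indicator_le l (B := ∅) fun a _ => .inr (hl a)
  calc g ∅ + chainGain g (fun u => ∑ S, if u ∈ S then p S else 0) l ∅
      = ∑ S, p S * (g ∅ + chainGain g (fun a => if a ∈ S then 1 else 0) l ∅) := by
        simp only [mul_add, sum_add_distrib, ← sum_mul, hp1, one_mul, ← chainGain_sum_mul,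
          mul_ite, mul_one, mul_zero]
    _ ≤ ∑ S, p S * g S := sum_le_sum fun S _ => mul_le_mul_of_nonneg_left (hpoint S) (hp S)

end Submodular

theorem stmt0_general {α : Type*} [Fintype α] [DecidableEq α] [Nonempty α]
    (m : ℝ)
    (f : Finset α → ℝ)
    (hsub : Submodular f)
    (hmon : MMonotone m f)
    (O : Finset α)
    (p : Finset α → ℝ) (hp : ∀ S, 0 ≤ p S) (hp1 : ∑ S : Finset α, p S = 1) :
    (1 - (1 - m) *
        (Finset.univ.sup' Finset.univ_nonempty
          (fun u : α => ∑ S : Finset α, if u ∈ S then p S else 0))) * f O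
      ≤ ∑ S : Finset α, p S * f (O ∪ S) := by
  set x : α → ℝ := fun u => ∑ S : Finset α, if u ∈ S then p S else 0
  have hx0 (u : α) : 0 ≤ x u := sum_nonneg fun S _ => ite_nonneg (hp S) le_rfl
  have hxq (u : α) : x u ≤ univ.sup' univ_nonempty x := le_sup' x (mem_univ u)
  obtain ⟨l, hl, hsorted⟩ := List.exists_forall_mem_pairwise_antitone x
  have hexp := (hsub.comp_union O).add_chainGain_le_expectation hl hp hp1
  have hbound := mul_sub_le_chainGain (fun S => f (O ∪ S)) (L := m * f O)
    (fun S => hmon O (O ∪ S) subset_union_left) hsorted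
    ((hx0 (Classical.arbitrary α)).trans (hxq _)) (fun a _ => ⟨hx0 a, hxq a⟩) ∅
  simp only [union_empty] at hexp hbound
  linarith

/-- for a non-negative `m`-monotone submodular `f`, a deterministic set `O` and a
random set `D` (given by a probability mass function `p` on subsets),
`E[f(O ∪ D)] ≥ (1 − (1 − m)·max_{u} Pr[u ∈ D]) · f(O)`. -/
theorem stmt0 {α : Type*} [Fintype α] [DecidableEq α] [Nonempty α]
    (m : ℝ) (hm : m ∈ Set.Icc (0 : ℝ) 1)
    (f : Finset α → ℝ)
    (hnn : ∀ S : Finset α, 0 ≤ f S)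
    (hsub : Submodular f)
    (hmon : MMonotone m f)
    (O : Finset α)
    (p : Finset α → ℝ) (hp : ∀ S, 0 ≤ p S) (hp1 : ∑ S : Finset α, p S = 1) :
    (1 - (1 - m) *
        (Finset.univ.sup' Finset.univ_nonempty
          (fun u : α => ∑ S : Finset α, if u ∈ S then p S else 0))) * f O
      ≤ ∑ S : Finset α, p S * f (O ∪ S) :=
  stmt0_general m f hsub hmon O p hp hp1
end

section
/- Let f be a submodular set function on a finite ground set 𝒩 and let f̂ be its Lovász extension. For every vector x ∈ [0,1]^𝒩 and every random subset D of 𝒩 whose marginals agree with x (i.e., Pr[u ∈ D] = x_u for every u ∈ 𝒩), it holds that f̂(x) ≤ E[f(D)]. -/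
/-!
Sort the ground set by decreasing `x`, breaking ties injectively, and let `w u` be the marginal
value of `u` on top of the elements preceding it (the weights of Edmonds' greedy algorithm).
Every superlevel set `T_λ(x)` is an initial segment of this order, so
`f (T_λ(x)) = f ∅ + ∑_{u ∈ T_λ(x)} w u`, and integrating over `λ` gives
`f̂(x) = f ∅ + ∑_u w u * x u`. By submodularity `f S ≥ f ∅ + ∑_{u ∈ S} w u` for every set `S`,
and the expectation of the right-hand side over `D` is again `f ∅ + ∑_u w u * x u`, because the
marginals of `D` are `x`.
-/

open MeasureTheory Finset

section Greedy

variable {α β : Type*} [Fintype α] [LinearOrder β]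

def keyPrefix (k : α → β) (u : α) : Finset α := univ.filter fun v => k v ≤ k u

variable [DecidableEq α]

noncomputable def greedyWeight (f : Finset α → ℝ) (k : α → β) (u : α) : ℝ :=
  f (keyPrefix k u) - f ((keyPrefix k u).erase u)

omit [DecidableEq α] in
@[simp]
lemma mem_keyPrefix {k : α → β} {u v : α} : v ∈ keyPrefix k u ↔ k v ≤ k u := by
  simp [keyPrefix]

lemma add_sum_greedyWeight_le {f : Finset α → ℝ} (hsub : Submodular f) (k : α → β)
    (S : Finset α) :
    f ∅ + ∑ u ∈ S, greedyWeight f k u ≤ f S := by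
  induction S using Finset.induction_on_max_value k with
  | empty => simp
  | insert a s ha hmax ih =>
    have hs : s ⊆ (keyPrefix k a).erase a := fun v hv =>
      mem_erase.mpr ⟨ne_of_mem_of_not_mem hv ha, mem_keyPrefix.mpr (hmax v hv)⟩
    have hexchange := hsub s _ hs a (notMem_erase a _)
    rw [insert_erase (mem_keyPrefix.mpr le_rfl)] at hexchange
    have hw : greedyWeight f k a = f (keyPrefix k a) - f ((keyPrefix k a).erase a) := rfl
    rw [sum_insert ha]
    linarith

lemma eq_add_sum_greedyWeight {k : α → β} (hk : Function.Injective k) (f : Finset α → ℝ)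
    (A : Finset α) (hA : ∀ u ∈ A, ∀ v, k v ≤ k u → v ∈ A) :
    f A = f ∅ + ∑ u ∈ A, greedyWeight f k u := by
  induction A using Finset.induction_on_max_value k with
  | empty => simp
  | insert a s ha hmax ih =>
    have hs : ∀ u ∈ s, ∀ v, k v ≤ k u → v ∈ s := fun u hu v hvu => by
      obtain rfl | hv := mem_insert.mp (hA u (mem_insert_of_mem hu) v hvu)
      · exact absurd (hk (le_antisymm (hmax u hu) hvu) ▸ hu) ha
      · exact hv
    have hprefix : keyPrefix k a = insert a s := by
      ext v
      simp only [mem_keyPrefix]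
      exact ⟨hA a (mem_insert_self a s) v,
        fun hv => (mem_insert.mp hv).elim (fun h => h ▸ le_rfl) (hmax v)⟩
    rw [sum_insert ha, add_left_comm, ← ih hs, greedyWeight, hprefix, erase_insert ha]
    ring

end Greedy

lemma step_eq_indicator (a c lam : ℝ) :
    (if lam ≤ a then c else 0) = {t : ℝ | t ≤ a}.indicator (fun _ => c) lam := by
  simp [Set.indicator_apply]

lemma intervalIntegrable_step (a c : ℝ) :
    IntervalIntegrable (fun lam => if lam ≤ a then c else 0) volume 0 1 := by
  simp only [step_eq_indicator]
  have hc : IntervalIntegrable (fun _ => c) volume (0 : ℝ) 1 := intervalIntegrable_const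
  exact ⟨hc.1.indicator measurableSet_Iic, hc.2.indicator measurableSet_Iic⟩

lemma integral_step {a : ℝ} (ha : a ∈ Set.Icc 0 1) (c : ℝ) :
    ∫ lam in (0 : ℝ)..1, (if lam ≤ a then c else 0) = c * a := by
  simp only [step_eq_indicator, intervalIntegral.integral_indicator ha,
    intervalIntegral.integral_const, sub_zero, smul_eq_mul, mul_comm]

lemma integral_add_sum_step {ι : Type*} (s : Finset ι) (b : ℝ) {x : ι → ℝ}
    (hx : ∀ i ∈ s, x i ∈ Set.Icc 0 1) (w : ι → ℝ) :
    ∫ lam in (0 : ℝ)..1, b + ∑ i ∈ s, (if lam ≤ x i then w i else 0) =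
      b + ∑ i ∈ s, w i * x i := by
  have hstep : ∀ i ∈ s, IntervalIntegrable (fun lam => if lam ≤ x i then w i else 0) volume 0 1 :=
    fun i _ => intervalIntegrable_step (x i) (w i)
  have hsum :
      IntervalIntegrable (fun lam => ∑ i ∈ s, if lam ≤ x i then w i else 0) volume 0 1 := by
    simpa only [Finset.sum_fn] using IntervalIntegrable.sum s hstep
  rw [intervalIntegral.integral_add intervalIntegrable_const hsum,
    intervalIntegral.integral_finsetSum hstep, intervalIntegral.integral_const, sub_zero, one_smul]
  exact congrArg _ (sum_congr rfl fun i hi => integral_step (hx i hi) (w i))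

lemma sum_mul_sum_mem_eq_sum_mul {α : Type*} [Fintype α] [DecidableEq α]
    {p : Finset α → ℝ} {x : α → ℝ}
    (hmarg : ∀ u, (∑ S : Finset α, if u ∈ S then p S else 0) = x u) (w : α → ℝ) :
    ∑ S : Finset α, p S * ∑ u ∈ S, w u = ∑ u, w u * x u := by
  simp_rw [← hmarg, mul_sum, mul_ite, mul_zero]
  rw [sum_comm]
  simp_rw [sum_ite_mem, univ_inter, mul_comm]

lemma exists_injective_key {α γ : Type*} [Countable α] [LinearOrder γ] (x : α → γ) :
    ∃ k : α → γᵒᵈ ×ₗ ℕ, Function.Injective k ∧ ∀ u v, k v ≤ k u → x u ≤ x v := by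
  obtain ⟨e, he⟩ := Countable.exists_injective_nat α
  refine ⟨fun u => toLex (OrderDual.toDual (x u), e u), fun u v huv => he ?_,
    fun u v h => Prod.Lex.monotone_fst _ _ h⟩
  exact congrArg (fun t => (ofLex t).2) huv

/-- the Lovász extension `f̂(x) = ∫₀¹ f(T_λ(x)) dλ` of a submodular function `f`
lower bounds `E[f(D)]` for any random set `D` (given by a probability mass function `p` on
subsets) whose marginals agree with `x`. -/
theorem stmt1 {α : Type*} [Fintype α] [DecidableEq α]
    (f : Finset α → ℝ) (hsub : Submodular f)
    (x : α → ℝ) (hx : ∀ u, x u ∈ Set.Icc (0 : ℝ) 1)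
    (p : Finset α → ℝ) (hp : ∀ S, 0 ≤ p S) (hp1 : ∑ S : Finset α, p S = 1)
    (hmarg : ∀ u, (∑ S : Finset α, if u ∈ S then p S else 0) = x u) :
    (∫ lam in (0 : ℝ)..1, f (Finset.univ.filter (fun u : α => lam ≤ x u)))
      ≤ ∑ S : Finset α, p S * f S := by
  obtain ⟨k, hk, hkx⟩ := exists_injective_key x
  set w := greedyWeight f k
  have hlevel : ∀ lam : ℝ, f (univ.filter fun u => lam ≤ x u)
      = f ∅ + ∑ u, if lam ≤ x u then w u else 0 := fun lam => by
    rw [← sum_filter]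
    refine eq_add_sum_greedyWeight hk f _ fun u hu v hvu => ?_
    simp only [mem_filter, mem_univ, true_and] at hu ⊢
    exact hu.trans (hkx u v hvu)
  calc ∫ lam in (0 : ℝ)..1, f (univ.filter fun u => lam ≤ x u)
      = f ∅ + ∑ u, w u * x u := by
        simp_rw [hlevel]
        exact integral_add_sum_step univ (f ∅) (fun u _ => hx u) w
    _ = ∑ S, p S * (f ∅ + ∑ u ∈ S, w u) := by
        simp_rw [mul_add, sum_add_distrib, ← sum_mul, hp1, one_mul,
          sum_mul_sum_mem_eq_sum_mul hmarg]
    _ ≤ ∑ S, p S * f S := sum_le_sum fun S _ =>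
        mul_le_mul_of_nonneg_left (add_sum_greedyWeight_le hsub k S) (hp S)
end

section
/- Let f be a non-negative m-monotone set function on a finite ground set 𝒩, and let F be its multilinear extension. Then for every two vectors x, y ∈ [0,1]^𝒩 with x ≤ y coordinate-wise, m·F(x) ≤ F(y). -/
/-- The multilinear extension `F(x) = Σ_{S ⊆ 𝒩} f(S)·∏_{u∈S} x_u·∏_{u∉S} (1 − x_u)`. -/
noncomputable def multilinearExt {α : Type*} [Fintype α] [DecidableEq α]
    (f : Finset α → ℝ) (x : α → ℝ) : ℝ :=
  ∑ S : Finset α, f S * (∏ u ∈ S, x u) * ∏ u ∈ Sᶜ, (1 - x u)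

/-- the multilinear extension of a non-negative `m`-monotone set function
satisfies `m·F(x) ≤ F(y)` whenever `0 ≤ x ≤ y ≤ 1` coordinate-wise. -/
theorem stmt2 {α : Type*} [Fintype α] [DecidableEq α]
    (m : ℝ) (hm : m ∈ Set.Icc (0 : ℝ) 1)
    (f : Finset α → ℝ)
    (hnn : ∀ S : Finset α, 0 ≤ f S)
    (hmon : MMonotone m f)
    (x y : α → ℝ)
    (hx0 : ∀ u, 0 ≤ x u) (hxy : ∀ u, x u ≤ y u) (hy1 : ∀ u, y u ≤ 1) :
    m * multilinearExt f x ≤ multilinearExt f y := by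
  simp only [multilinearExt]
  have hw : ∀ (S U : Finset α), 0 ≤ (∏ u ∈ S, x u) * ((∏ u ∈ U, (y u - x u)) *
      ∏ u ∈ Sᶜ \ U, (1 - y u)) := by
    intro S U
    apply mul_nonneg (Finset.prod_nonneg fun u _ => hx0 u)
    exact mul_nonneg (Finset.prod_nonneg fun u _ => sub_nonneg.2 (hxy u))
      (Finset.prod_nonneg fun u _ => sub_nonneg.2 (hy1 u))
  calc m * (∑ S : Finset α, f S * (∏ u ∈ S, x u) * ∏ u ∈ Sᶜ, (1 - x u))
      = ∑ S : Finset α, ∑ U ∈ Sᶜ.powerset, (m * f S) *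
        ((∏ u ∈ S, x u) * ((∏ u ∈ U, (y u - x u)) * ∏ u ∈ Sᶜ \ U, (1 - y u))) := by
        rw [Finset.mul_sum]
        refine Finset.sum_congr rfl fun S _ => ?_
        have h1 : ∏ u ∈ Sᶜ, (1 - x u) = ∑ U ∈ Sᶜ.powerset,
            (∏ u ∈ U, (y u - x u)) * ∏ u ∈ Sᶜ \ U, (1 - y u) := by
          rw [← Finset.prod_add]
          exact Finset.prod_congr rfl fun u _ => by ring
        rw [h1, Finset.mul_sum, Finset.mul_sum]
        exact Finset.sum_congr rfl fun U _ => by ring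
    _ ≤ ∑ S : Finset α, ∑ U ∈ Sᶜ.powerset, f (S ∪ U) *
        ((∏ u ∈ S, x u) * ((∏ u ∈ U, (y u - x u)) * ∏ u ∈ Sᶜ \ U, (1 - y u))) := by
        refine Finset.sum_le_sum fun S _ => Finset.sum_le_sum fun U _ => ?_
        exact mul_le_mul_of_nonneg_right (hmon S (S ∪ U) Finset.subset_union_left) (hw S U)
    _ = ∑ T : Finset α, ∑ S ∈ T.powerset, f T *
        ((∏ u ∈ S, x u) * ((∏ u ∈ T \ S, (y u - x u)) * ∏ u ∈ Tᶜ, (1 - y u))) := by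
        rw [Finset.sum_sigma', Finset.sum_sigma']
        refine Finset.sum_bij' (fun p _ => ⟨p.1 ∪ p.2, p.1⟩) (fun p _ => ⟨p.2, p.1 \ p.2⟩)
          ?_ ?_ ?_ ?_ ?_
        · rintro ⟨S, U⟩ hp
          simp only [Finset.mem_sigma, Finset.mem_univ, Finset.mem_powerset] at hp ⊢
          exact ⟨trivial, Finset.subset_union_left⟩
        · rintro ⟨T, S⟩ hp
          simp only [Finset.mem_sigma, Finset.mem_univ, Finset.mem_powerset] at hp ⊢
          refine ⟨trivial, fun u hu => ?_⟩
          rw [Finset.mem_sdiff] at hu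
          exact Finset.mem_compl.2 hu.2
        · rintro ⟨S, U⟩ hp
          simp only [Finset.mem_sigma, Finset.mem_univ, Finset.mem_powerset] at hp
          have hd : Disjoint S U := Finset.disjoint_left.2 fun a haS haU =>
            Finset.mem_compl.1 (hp.2 haU) haS
          simp [Sigma.mk.inj_iff, Finset.union_sdiff_cancel_left hd]
        · rintro ⟨T, S⟩ hp
          simp only [Finset.mem_sigma, Finset.mem_univ, Finset.mem_powerset] at hp
          simp [Sigma.mk.inj_iff, Finset.union_sdiff_of_subset hp.2]
        · rintro ⟨S, U⟩ hp
          simp only [Finset.mem_sigma, Finset.mem_univ, Finset.mem_powerset] at hp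
          have hd : Disjoint S U := Finset.disjoint_left.2 fun a haS haU =>
            Finset.mem_compl.1 (hp.2 haU) haS
          have h1 : (S ∪ U) \ S = U := Finset.union_sdiff_cancel_left hd
          have h2 : (S ∪ U)ᶜ = Sᶜ \ U := by
            ext u; simp [not_or, Finset.mem_sdiff]
          rw [h1, h2]
    _ = ∑ S : Finset α, f S * (∏ u ∈ S, y u) * ∏ u ∈ Sᶜ, (1 - y u) := by
        refine Finset.sum_congr rfl fun T _ => ?_
        have h1 : ∑ S ∈ T.powerset, f T *
            ((∏ u ∈ S, x u) * ((∏ u ∈ T \ S, (y u - x u)) * ∏ u ∈ Tᶜ, (1 - y u)))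
            = f T * ((∑ S ∈ T.powerset, (∏ u ∈ S, x u) * ∏ u ∈ T \ S, (y u - x u)) *
              ∏ u ∈ Tᶜ, (1 - y u)) := by
          simp only [Finset.sum_mul, Finset.mul_sum]
          exact Finset.sum_congr rfl fun S _ => by ring
        rw [h1, ← Finset.prod_add]
        have : ∏ u ∈ T, (x u + (y u - x u)) = ∏ u ∈ T, y u :=
          Finset.prod_congr rfl fun u _ => by ring
        rw [this]; ring
end

section
/- Fix m ∈ [0,1] and let F: [0,1]² → ℝ be defined by F(x₁, x₂) = x₁ + x₂ − (2 − m)·x₁x₂ (this is the multilinear extension of the set function f on a two-element ground set {u, v} given by f(S) = m·1[S ≠ ∅] + (1 − m)·(|S| mod 2)). Then the maximum of F over [0,1]² equals 1, while the maximum of F over the diagonal {(y, y) : y ∈ [0,1]} equals 1/(2 − m). In particular, the symmetry gap of the corresponding unconstrained maximization problem is 1/(2 − m). -/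
/-! With `c = 2 - m ≥ 1`, `1 - F(x₁, x₂) = (1 - x₁)(1 - x₂) + (c - 1)x₁x₂ ≥ 0` on the square,
with equality at `(1, 0)`; on the diagonal `1/c - F(y, y) = (cy - 1)²/c`, which vanishes at
`y = 1/c ∈ [0, 1]`. -/

open Set

lemma add_sub_mul_mul_le_one {c x y : ℝ} (hc : 1 ≤ c) (hx : x ∈ Icc 0 1) (hy : y ∈ Icc 0 1) :
    x + y - c * (x * y) ≤ 1 := by
  have h₁ : 0 ≤ (1 - x) * (1 - y) := mul_nonneg (sub_nonneg.2 hx.2) (sub_nonneg.2 hy.2)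
  have h₂ : 0 ≤ (c - 1) * (x * y) := mul_nonneg (sub_nonneg.2 hc) (mul_nonneg hx.1 hy.1)
  linarith

lemma add_sub_mul_mul_self_le_one_div {c : ℝ} (hc : 0 < c) (y : ℝ) :
    y + y - c * (y * y) ≤ 1 / c := by
  rw [le_div_iff₀ hc]
  nlinarith [sq_nonneg (c * y - 1)]

lemma one_div_add_one_div_sub_mul {c : ℝ} (hc : c ≠ 0) :
    1 / c + 1 / c - c * (1 / c * (1 / c)) = 1 / c := by
  field_simp
  ring

/-- for `F(x₁,x₂) = x₁ + x₂ − (2−m)x₁x₂` with `m ∈ [0,1]`, the maximum of `F`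
over `[0,1]²` equals `1`, while the maximum over the diagonal equals `1/(2−m)`; hence the
symmetry gap of the corresponding unconstrained problem is `1/(2−m)`. -/
theorem stmt4 (m : ℝ) (hm : m ∈ Set.Icc (0 : ℝ) 1)
    (F : ℝ → ℝ → ℝ)
    (hF : ∀ x₁ x₂ : ℝ, F x₁ x₂ = x₁ + x₂ - (2 - m) * (x₁ * x₂)) :
    IsGreatest {z : ℝ | ∃ x₁ ∈ Set.Icc (0 : ℝ) 1, ∃ x₂ ∈ Set.Icc (0 : ℝ) 1, z = F x₁ x₂} 1 ∧
    IsGreatest {z : ℝ | ∃ y ∈ Set.Icc (0 : ℝ) 1, z = F y y} (1 / (2 - m)) := by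
  have hc : 1 ≤ 2 - m := by linarith [hm.2]
  have hc₀ : 0 < 2 - m := by linarith
  refine ⟨⟨⟨1, right_mem_Icc.2 zero_le_one, 0, left_mem_Icc.2 zero_le_one, by simp [hF]⟩, ?_⟩,
    ⟨⟨1 / (2 - m), ⟨by positivity, (div_le_one hc₀).2 hc⟩, ?_⟩, ?_⟩⟩
  · rintro z ⟨x₁, hx₁, x₂, hx₂, rfl⟩
    exact hF x₁ x₂ ▸ add_sub_mul_mul_le_one hc hx₁ hx₂
  · rw [hF, one_div_add_one_div_sub_mul hc₀.ne']
  · rintro z ⟨y, -, rfl⟩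
    exact hF y y ▸ add_sub_mul_mul_self_le_one_div hc₀ y
end

section
/- Let f be a non-negative m-monotone submodular set function on a finite ground set 𝒩, let k ≥ 1 be an integer, let A ⊊ 𝒩, and let O ⊆ 𝒩 with |O| ≤ k. If u* is an element of 𝒩 ∖ A maximizing the marginal contribution f(A ∪ {u}) − f(A) over all u ∈ 𝒩 ∖ A, then max{f(A ∪ {u*}) − f(A), 0} ≥ (m·f(O) − f(A))/k. -/
lemma sub_le_sum {α : Type*} [Fintype α] [DecidableEq α] (f : Finset α → ℝ)
    (hsub : Submodular f) (A : Finset α) :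
    ∀ S : Finset α, Disjoint S A →
      f (A ∪ S) - f A ≤ ∑ u ∈ S, (f (insert u A) - f A) := by
  intro S
  induction S using Finset.induction_on with
  | empty => simp
  | @insert v S hv ih =>
    intro hdisj
    have hdS : Disjoint S A := (Finset.disjoint_insert_left.mp hdisj).2
    have hvA : v ∉ A := (Finset.disjoint_insert_left.mp hdisj).1
    have hvAS : v ∉ A ∪ S := by simp [hv, hvA]
    have h1 : f (insert v (A ∪ S)) - f (A ∪ S) ≤ f (insert v A) - f A :=
      hsub A (A ∪ S) Finset.subset_union_left v hvAS
    have heq : A ∪ insert v S = insert v (A ∪ S) := by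
      ext x; simp [or_comm, or_left_comm]
    rw [heq, Finset.sum_insert hv]
    have := ih hdS
    linarith

/-- if `u*` maximizes the marginal contribution to `A ⊊ 𝒩` and `|O| ≤ k`, then
`max{f(A ∪ {u*}) − f(A), 0} ≥ (m·f(O) − f(A))/k`. -/
theorem stmt5 {α : Type*} [Fintype α] [DecidableEq α]
    (m : ℝ) (hm : m ∈ Set.Icc (0 : ℝ) 1)
    (f : Finset α → ℝ)
    (hnn : ∀ S : Finset α, 0 ≤ f S)
    (hsub : Submodular f)
    (hmon : MMonotone m f)
    (k : ℕ) (hk : 1 ≤ k)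
    (A : Finset α) (hA : A ⊂ Finset.univ)
    (O : Finset α) (hO : O.card ≤ k)
    (ustar : α) (hustar : ustar ∉ A)
    (hmax : ∀ u, u ∉ A → f (insert u A) - f A ≤ f (insert ustar A) - f A) :
    (m * f O - f A) / (k : ℝ) ≤ max (f (insert ustar A) - f A) 0 := by
  set M := max (f (insert ustar A) - f A) 0 with hM
  have hM0 : 0 ≤ M := le_max_right _ _
  have hkpos : (0 : ℝ) < k := by exact_mod_cast hk
  rw [div_le_iff₀ hkpos]
  have hS : Disjoint (O \ A) A := Finset.sdiff_disjoint
  have h1 : f (A ∪ (O \ A)) - f A ≤ ∑ u ∈ O \ A, (f (insert u A) - f A) :=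
    sub_le_sum f hsub A _ hS
  have h2 : ∑ u ∈ O \ A, (f (insert u A) - f A) ≤ (O \ A).card • M := by
    apply Finset.sum_le_card_nsmul
    intro u hu
    have huA : u ∉ A := (Finset.mem_sdiff.mp hu).2
    exact le_trans (hmax u huA) (le_max_left _ _)
  have hcard : ((O \ A).card : ℝ) ≤ (k : ℝ) := by
    exact_mod_cast le_trans (Finset.card_le_card (Finset.sdiff_subset)) hO
  have h3 : ((O \ A).card : ℝ) * M ≤ (k : ℝ) * M := by
    exact mul_le_mul_of_nonneg_right hcard hM0
  have hmono : m * f O ≤ f (A ∪ (O \ A)) := by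
    apply hmon
    intro x hx
    by_cases hxA : x ∈ A <;> simp [hxA, hx]
  have h2' : ∑ u ∈ O \ A, (f (insert u A) - f A) ≤ ((O \ A).card : ℝ) * M := by
    simpa [nsmul_eq_mul] using h2
  have : (k : ℝ) * M = M * (k : ℝ) := mul_comm _ _
  linarith
end

section
/- Let f be a non-negative m-monotone submodular set function on a finite ground set 𝒩, and let k be an integer with 1 ≤ k ≤ |𝒩|. Consider any run of the greedy algorithm: A₀ = ∅, and for i = 1, …, k, let uᵢ be an element of 𝒩 ∖ A_{i−1} maximizing f(A_{i−1} ∪ {u}) − f(A_{i−1}) over u ∈ 𝒩 ∖ A_{i−1}; if f(A_{i−1} ∪ {uᵢ}) − f(A_{i−1}) ≥ 0 then Aᵢ = A_{i−1} ∪ {uᵢ}, and otherwise Aᵢ = A_{i−1}. Then for every set O ⊆ 𝒩 with |O| ≤ k, f(A_k) ≥ m·(1 − 1/e)·f(O). -/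
namespace Submodular

variable {α : Type*} [Fintype α] [DecidableEq α] {f : Finset α → ℝ}

theorem sub_le_sum_sdiff (hsub : Submodular f) (S T : Finset α) :
    f (S ∪ T) - f S ≤ ∑ v ∈ T \ S, (f (insert v S) - f S) := by
  induction T using Finset.induction_on with
  | empty => simp
  | @insert a T haT ih =>
    by_cases haS : a ∈ S
    · rwa [Finset.union_insert, Finset.insert_eq_of_mem (Finset.mem_union_left _ haS),
        Finset.insert_sdiff_of_mem _ haS]
    · have haST : a ∉ S ∪ T := by simp [haS, haT]
      have hgain := hsub S (S ∪ T) Finset.subset_union_left a haST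
      rw [Finset.insert_sdiff_of_notMem _ haS,
        Finset.sum_insert fun h => haT (Finset.mem_sdiff.mp h).1, Finset.union_insert]
      linarith

theorem sub_le_card_mul (hsub : Submodular f) {S : Finset α} {g : ℝ} (hg : 0 ≤ g)
    (hgain : ∀ v ∉ S, f (insert v S) - f S ≤ g) (T : Finset α) :
    f (S ∪ T) - f S ≤ T.card * g :=
  calc f (S ∪ T) - f S ≤ ∑ v ∈ T \ S, (f (insert v S) - f S) := hsub.sub_le_sum_sdiff S T
    _ ≤ ∑ _v ∈ T \ S, g := Finset.sum_le_sum fun v hv => hgain v (Finset.mem_sdiff.mp hv).2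
    _ = (T \ S).card * g := by rw [Finset.sum_const, nsmul_eq_mul]
    _ ≤ T.card * g := by gcongr; exact Finset.sdiff_subset

theorem greedy_step_gap_le {m : ℝ} (hsub : Submodular f) (hmon : MMonotone m f)
    {S : Finset α} {u : α}
    (hmax : ∀ v ∉ S, f (insert v S) - f S ≤ f (insert u S) - f S)
    {O : Finset α} {k : ℕ} (hO : O.card ≤ k) :
    m * f O - f S ≤
      k * (f (if 0 ≤ f (insert u S) - f S then insert u S else S) - f S) := by
  set g := f (if 0 ≤ f (insert u S) - f S then insert u S else S) - f S
  have hg : 0 ≤ g ∧ ∀ v ∉ S, f (insert v S) - f S ≤ g := by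
    simp only [g]
    split_ifs with hu
    · exact ⟨hu, hmax⟩
    · exact ⟨le_of_eq (sub_self _).symm, fun v hv => by linarith [hmax v hv]⟩
  have hunion := hsub.sub_le_card_mul hg.1 hg.2 O
  have hcard : (O.card : ℝ) * g ≤ k * g := mul_le_mul_of_nonneg_right (by exact_mod_cast hO) hg.1
  linarith [hmon O (S ∪ O) Finset.subset_union_right]

end Submodular

theorem sub_le_pow_mul_of_gap_le {a : ℕ → ℝ} {M : ℝ} {k n : ℕ} (hk : 1 ≤ k)
    (hgap : ∀ i < n, M - a i ≤ k * (a (i + 1) - a i)) :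
    M - a n ≤ (1 - 1 / k) ^ n * (M - a 0) := by
  have hk0 : (0 : ℝ) < k := by exact_mod_cast hk
  induction n with
  | zero => simp
  | succ n ih =>
    have hcontract : M - a (n + 1) ≤ (1 - 1 / k) * (M - a n) := by
      have h := hgap n n.lt_succ_self
      rw [one_sub_div hk0.ne', div_mul_eq_mul_div, le_div_iff₀ hk0]
      linarith
    calc M - a (n + 1) ≤ (1 - 1 / k) * (M - a n) := hcontract
      _ ≤ (1 - 1 / k) * ((1 - 1 / k) ^ n * (M - a 0)) :=
        mul_le_mul_of_nonneg_left (ih fun i hi => hgap i (hi.trans n.lt_succ_self))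
          (Nat.one_sub_one_div_cast_nonneg k)
      _ = (1 - 1 / k) ^ (n + 1) * (M - a 0) := by ring

theorem stmt6_general {α : Type*} [Fintype α] [DecidableEq α]
    (m : ℝ) (hm : m ∈ Set.Icc (0 : ℝ) 1)
    (f : Finset α → ℝ)
    (hnn : ∀ S : Finset α, 0 ≤ f S)
    (hsub : Submodular f)
    (hmon : MMonotone m f)
    (k : ℕ) (hk1 : 1 ≤ k)
    (A : ℕ → Finset α) (u : ℕ → α)
    (hstep : ∀ i < k, u i ∉ A i ∧
      (∀ v, v ∉ A i → f (insert v (A i)) - f (A i) ≤ f (insert (u i) (A i)) - f (A i)) ∧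
      A (i + 1) =
        if 0 ≤ f (insert (u i) (A i)) - f (A i) then insert (u i) (A i) else A i)
    (O : Finset α) (hO : O.card ≤ k) :
    m * (1 - 1 / Real.exp 1) * f O ≤ f (A k) := by
  have hgap : ∀ i < k, m * f O - f (A i) ≤ k * (f (A (i + 1)) - f (A i)) := fun i hi => by
    obtain ⟨-, hmax, hnext⟩ := hstep i hi
    rw [hnext]
    exact hsub.greedy_step_gap_le hmon hmax hO
  have hdecay := sub_le_pow_mul_of_gap_le hk1 hgap
  have hpow : (1 - 1 / (k : ℝ)) ^ k ≤ 1 / Real.exp 1 := by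
    rw [one_div (Real.exp 1), ← Real.exp_neg]
    exact Real.one_sub_div_pow_le_exp_neg (by exact_mod_cast hk1)
  have hmfO : 0 ≤ m * f O := mul_nonneg hm.1 (hnn O)
  have hpow0 : 0 ≤ (1 - 1 / (k : ℝ)) ^ k := pow_nonneg (Nat.one_sub_one_div_cast_nonneg k) k
  linarith [mul_le_mul_of_nonneg_right hpow hmfO, mul_nonneg hpow0 (hnn (A 0))]

/-- the greedy algorithm for a cardinality constraint `k` applied to a
non-negative `m`-monotone submodular function returns a set `A_k` with
`f(A_k) ≥ m·(1 − 1/e)·f(O)` for every `O` with `|O| ≤ k`. At each step `i < k`,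
`u i` is an element of `𝒩 ∖ A_i` maximizing the marginal contribution to `A_i`, and it is
added to the solution exactly when this marginal contribution is non-negative. -/
theorem stmt6 {α : Type*} [Fintype α] [DecidableEq α]
    (m : ℝ) (hm : m ∈ Set.Icc (0 : ℝ) 1)
    (f : Finset α → ℝ)
    (hnn : ∀ S : Finset α, 0 ≤ f S)
    (hsub : Submodular f)
    (hmon : MMonotone m f)
    (k : ℕ) (hk1 : 1 ≤ k) (hk2 : k ≤ Fintype.card α)
    (A : ℕ → Finset α) (u : ℕ → α)
    (hA0 : A 0 = ∅)
    (hstep : ∀ i < k, u i ∉ A i ∧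
      (∀ v, v ∉ A i → f (insert v (A i)) - f (A i) ≤ f (insert (u i) (A i)) - f (A i)) ∧
      A (i + 1) =
        if 0 ≤ f (insert (u i) (A i)) - f (A i) then insert (u i) (A i) else A i)
    (O : Finset α) (hO : O.card ≤ k) :
    m * (1 - 1 / Real.exp 1) * f O ≤ f (A k) :=
  stmt6_general m hm f hnn hsub hmon k hk1 A u hstep O hO
end

section
/- Let k ≥ 1 be an integer, let m ∈ [0,1], let V ≥ 0, and let a₀, a₁, …, a_k be real numbers with a₀ ≥ 0 and, for every integer 1 ≤ i ≤ k, aᵢ ≥ (1 − 1/k)·a_{i−1} + (m + (1 − m)(1 − 1/k)^{i−1})·V/k. Then for every integer 0 ≤ i ≤ k, aᵢ ≥ [m·(1 − (1 − 1/k)^i) + (1 − m)·(i/k)·(1 − 1/k)^{i−1}]·V; in particular, a_k ≥ [m·(1 − 1/e) + (1 − m)·(1/e)]·V. -/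
/-! The coefficient `c i = m (1 - q^i) + (1 - m) (i/k) q^(i-1)`, with `q = 1 - 1/k`, satisfies the
recursion with equality, `c (i+1) = q c i + (m + (1-m) q^i)/k`; since `q ≥ 0`, a sequence satisfying
the recursive inequality stays above `c i · V` by induction. At `i = k` the bounds
`(1 - 1/k)^k ≤ 1/e ≤ (1 - 1/k)^(k-1)` then give the final estimate. -/

open Real

theorem le_of_linear_recurrence {q : ℝ} (hq : 0 ≤ q) {a c d : ℕ → ℝ} {n : ℕ}
    (h0 : c 0 ≤ a 0) (hc : ∀ i < n, c (i + 1) ≤ q * c i + d i)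
    (ha : ∀ i < n, q * a i + d i ≤ a (i + 1)) : ∀ i ≤ n, c i ≤ a i := by
  intro i hi
  induction i with
  | zero => exact h0
  | succ i ih =>
    calc c (i + 1) ≤ q * c i + d i := hc i hi
      _ ≤ q * a i + d i := by gcongr; exact ih (by omega)
      _ ≤ a (i + 1) := ha i hi

theorem one_sub_inv_pow_le_inv_exp_one {k : ℕ} (hk : 1 ≤ k) :
    (1 - 1 / (k : ℝ)) ^ k ≤ 1 / exp 1 := by
  simpa [exp_neg] using one_sub_div_pow_le_exp_neg (n := k) (t := 1) (by exact_mod_cast hk)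

theorem inv_exp_one_le_one_sub_inv_pow (k : ℕ) :
    1 / exp 1 ≤ (1 - 1 / (k : ℝ)) ^ (k - 1) := by
  obtain _ | n := k
  · simpa using inv_le_one_of_one_le₀ (one_le_exp zero_le_one)
  have hreciprocal : (1 - 1 / ((n + 1 : ℕ) : ℝ)) ^ n = 1 / (1 + (n : ℝ)⁻¹) ^ n := by
    obtain _ | n := n
    · simp
    · rw [← one_div_pow]
      congr 1
      have : (n : ℝ) + 1 ≠ 0 := by positivity
      push_cast
      field
  rw [Nat.add_sub_cancel, hreciprocal]
  exact one_div_le_one_div_of_le (by positivity) one_add_inv_pow_le_exp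

noncomputable def randomGreedyCoeff (k m : ℝ) (i : ℕ) : ℝ :=
  m * (1 - (1 - 1 / k) ^ i) + (1 - m) * ((i : ℝ) / k) * (1 - 1 / k) ^ (i - 1)

@[simp]
theorem randomGreedyCoeff_zero (k m : ℝ) : randomGreedyCoeff k m 0 = 0 := by
  simp [randomGreedyCoeff]

theorem randomGreedyCoeff_succ (k m : ℝ) (i : ℕ) :
    randomGreedyCoeff k m (i + 1)
      = (1 - 1 / k) * randomGreedyCoeff k m i + (m + (1 - m) * (1 - 1 / k) ^ i) / k := by
  obtain _ | i := i <;> simp only [randomGreedyCoeff] <;> push_cast <;> ring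

theorem randomGreedyCoeff_self_ge {k : ℕ} (hk : 1 ≤ k) {m : ℝ} (hm : m ∈ Set.Icc (0 : ℝ) 1) :
    m * (1 - 1 / exp 1) + (1 - m) * (1 / exp 1) ≤ randomGreedyCoeff k m k := by
  have hk' : (k : ℝ) ≠ 0 := by positivity
  have upper := mul_le_mul_of_nonneg_left (one_sub_inv_pow_le_inv_exp_one hk) hm.1
  have lower := mul_le_mul_of_nonneg_left (inv_exp_one_le_one_sub_inv_pow k) (sub_nonneg.2 hm.2)
  rw [randomGreedyCoeff, div_self hk', mul_one]
  linarith

/-- the Random Greedy recursion. If `a₀ ≥ 0` and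
`aᵢ ≥ (1 − 1/k)·a_{i−1} + (m + (1−m)(1−1/k)^{i−1})·V/k` for `1 ≤ i ≤ k`, then
`aᵢ ≥ [m(1 − (1−1/k)^i) + (1−m)(i/k)(1−1/k)^{i−1}]·V` for all `0 ≤ i ≤ k`, and in
particular `a_k ≥ [m(1 − 1/e) + (1−m)/e]·V`. -/
theorem stmt7 (k : ℕ) (hk : 1 ≤ k)
    (m V : ℝ) (hm : m ∈ Set.Icc (0 : ℝ) 1) (hV : 0 ≤ V)
    (a : ℕ → ℝ) (ha0 : 0 ≤ a 0)
    (hrec : ∀ i : ℕ, 1 ≤ i → i ≤ k →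
      (1 - 1 / (k : ℝ)) * a (i - 1)
        + (m + (1 - m) * (1 - 1 / (k : ℝ)) ^ (i - 1)) * V / (k : ℝ) ≤ a i) :
    (∀ i : ℕ, i ≤ k →
      (m * (1 - (1 - 1 / (k : ℝ)) ^ i)
        + (1 - m) * ((i : ℝ) / (k : ℝ)) * (1 - 1 / (k : ℝ)) ^ (i - 1)) * V ≤ a i) ∧
    (m * (1 - 1 / Real.exp 1) + (1 - m) * (1 / Real.exp 1)) * V ≤ a k := by
  have hq : 0 ≤ 1 - 1 / (k : ℝ) :=
    sub_nonneg.2 (div_le_one_of_le₀ (by exact_mod_cast hk) (Nat.cast_nonneg k))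
  have bound : ∀ i ≤ k, randomGreedyCoeff k m i * V ≤ a i :=
    le_of_linear_recurrence hq (d := fun i => (m + (1 - m) * (1 - 1 / (k : ℝ)) ^ i) * V / k)
      (by simpa using ha0)
      (fun i _ => le_of_eq (by rw [randomGreedyCoeff_succ]; ring))
      (fun i hi => by simpa using hrec (i + 1) (by omega) hi)
  exact ⟨bound, (mul_le_mul_of_nonneg_right (randomGreedyCoeff_self_ge hk hm) hV).trans
    (bound k le_rfl)⟩
end

section
/- Fix an integer r ≥ 1 and constants m ∈ [0,1] and α ∈ [0,1]. Let the ground set be 𝒩 = {a, b} ∪ {a₁, …, a_r} ∪ {b₁, …, b_r} (2r + 2 distinct elements), and define f: 2^𝒩 → ℝ by f(S) = α·f₁(S) + (1 − α)·[f₂(S) + f₃(S)], where f₁(S) = m·1[S ∩ {a,b} ≠ ∅] + (1 − m)·(|S ∩ {a,b}| mod 2), f₂(S) = 1[S ∩ {a₁,…,a_r} ≠ ∅]·(1 − (1 − m)·1[a ∈ S]), and f₃(S) = 1[S ∩ {b₁,…,b_r} ≠ ∅]·(1 − (1 − m)·1[b ∈ S]). Then f is non-negative, m-monotone, and submodular.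 -/
/-- indicator of a boolean -/
def bind' (b : Bool) : ℝ := cond b 1 0

/-- the `{a,b}`-part of the hard instance -/
def g1 (m : ℝ) (pa pb : Bool) : ℝ :=
  m * bind' (pa || pb) + (1 - m) * bind' (xor pa pb)

/-- the coverage-times-discount part -/
def g2 (m : ℝ) (pa qa : Bool) : ℝ :=
  bind' qa * (1 - (1 - m) * bind' pa)

lemma bind'_decide (P : Prop) [Decidable P] :
    bind' (decide P) = if P then (1:ℝ) else 0 := by
  by_cases h : P <;> simp [bind', h]

lemma g1_nonneg {m : ℝ} (h0 : 0 ≤ m) (h1 : m ≤ 1) (pa pb : Bool) :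
    0 ≤ g1 m pa pb := by
  cases pa <;> cases pb <;> simp [g1, bind'] <;> linarith

lemma g2_nonneg {m : ℝ} (h0 : 0 ≤ m) (h1 : m ≤ 1) (pa qa : Bool) :
    0 ≤ g2 m pa qa := by
  cases pa <;> cases qa <;> simp [g2, bind'] <;> linarith

lemma g1_mono {m : ℝ} (h0 : 0 ≤ m) (h1 : m ≤ 1) (pa pb pa' pb' : Bool)
    (ha : pa = true → pa' = true) (hb : pb = true → pb' = true) :
    m * g1 m pa pb ≤ g1 m pa' pb' := by
  cases pa <;> cases pb <;> cases pa' <;> cases pb' <;>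
    simp_all [g1, bind'] <;> nlinarith

lemma g2_mono {m : ℝ} (h0 : 0 ≤ m) (h1 : m ≤ 1) (pa qa pa' qa' : Bool)
    (ha : pa = true → pa' = true) (hq : qa = true → qa' = true) :
    m * g2 m pa qa ≤ g2 m pa' qa' := by
  cases pa <;> cases qa <;> cases pa' <;> cases qa' <;>
    simp_all [g2, bind'] <;> nlinarith

lemma g1_submod_a {m : ℝ} (h0 : 0 ≤ m) (h1 : m ≤ 1) (pb pb' : Bool)
    (hb : pb = true → pb' = true) :
    g1 m true pb' - g1 m false pb' ≤ g1 m true pb - g1 m false pb := by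
  cases pb <;> cases pb' <;> simp_all [g1, bind'] <;> nlinarith

lemma g1_submod_b {m : ℝ} (h0 : 0 ≤ m) (h1 : m ≤ 1) (pa pa' : Bool)
    (hb : pa = true → pa' = true) :
    g1 m pa' true - g1 m pa' false ≤ g1 m pa true - g1 m pa false := by
  cases pa <;> cases pa' <;> simp_all [g1, bind'] <;> nlinarith

lemma g2_submod_a {m : ℝ} (h0 : 0 ≤ m) (h1 : m ≤ 1) (qa qa' : Bool)
    (hq : qa = true → qa' = true) :
    g2 m true qa' - g2 m false qa' ≤ g2 m true qa - g2 m false qa := by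
  cases qa <;> cases qa' <;> simp_all [g2, bind'] <;> nlinarith

lemma g2_submod_i {m : ℝ} (h0 : 0 ≤ m) (h1 : m ≤ 1) (pa qa pa' qa' : Bool)
    (ha : pa = true → pa' = true) (hq : qa = true → qa' = true) :
    g2 m pa' true - g2 m pa' qa' ≤ g2 m pa true - g2 m pa qa := by
  cases pa <;> cases qa <;> cases pa' <;> cases qa' <;>
    simp_all [g2, bind'] <;> nlinarith



/-- the hard instance for the cardinality-constraint inapproximability result.
The ground set is `{a, b} ∪ {a₁, …, a_r} ∪ {b₁, …, b_r}`, modeled as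
`Bool ⊕ (Fin r ⊕ Fin r)` with `a = inl true`, `b = inl false`, `aᵢ = inr (inl i)` and
`bᵢ = inr (inr i)`. The function `f = α·f₁ + (1−α)·(f₂ + f₃)` is non-negative, `m`-monotone
and submodular. -/
theorem stmt8 (r : ℕ) (hr : 1 ≤ r)
    (m alpha : ℝ) (hm : m ∈ Set.Icc (0 : ℝ) 1) (halpha : alpha ∈ Set.Icc (0 : ℝ) 1)
    (f : Finset (Bool ⊕ (Fin r ⊕ Fin r)) → ℝ)
    (hf : ∀ S : Finset (Bool ⊕ (Fin r ⊕ Fin r)), f S =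
      alpha *
        (m * (if S ∩ {Sum.inl true, Sum.inl false} ≠ ∅ then (1 : ℝ) else 0)
          + (1 - m) * (((S ∩ {Sum.inl true, Sum.inl false}).card % 2 : ℕ) : ℝ))
      + (1 - alpha) *
        ((if ∃ i : Fin r, Sum.inr (Sum.inl i) ∈ S then (1 : ℝ) else 0) *
            (1 - (1 - m) * (if Sum.inl true ∈ S then (1 : ℝ) else 0))
          + (if ∃ i : Fin r, Sum.inr (Sum.inr i) ∈ S then (1 : ℝ) else 0) *
            (1 - (1 - m) * (if Sum.inl false ∈ S then (1 : ℝ) else 0)))) :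
    (∀ S, 0 ≤ f S) ∧ MMonotone m f ∧ Submodular f := by
  obtain ⟨hm0, hm1⟩ := hm
  obtain ⟨ha0, ha1⟩ := halpha
  have ha1' : 0 ≤ 1 - alpha := by linarith
  -- the bridge: f only depends on four booleans
  have hF : ∀ S : Finset (Bool ⊕ (Fin r ⊕ Fin r)), f S =
      alpha * g1 m (decide (Sum.inl true ∈ S)) (decide (Sum.inl false ∈ S))
      + (1 - alpha) *
        (g2 m (decide (Sum.inl true ∈ S)) (decide (∃ i : Fin r, Sum.inr (Sum.inl i) ∈ S))
         + g2 m (decide (Sum.inl false ∈ S)) (decide (∃ i : Fin r, Sum.inr (Sum.inr i) ∈ S))) := by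
    intro S
    rw [hf]
    have hne : (S ∩ {Sum.inl true, Sum.inl false} ≠ ∅) ↔
        (Sum.inl true ∈ S ∨ Sum.inl false ∈ S) := by
      rw [← Finset.nonempty_iff_ne_empty]
      constructor
      · rintro ⟨x, hx⟩
        simp only [Finset.mem_inter, Finset.mem_insert, Finset.mem_singleton] at hx
        rcases hx with ⟨hxS, rfl | rfl⟩
        · exact Or.inl hxS
        · exact Or.inr hxS
      · rintro (h | h)
        · exact ⟨_, Finset.mem_inter.mpr ⟨h, by simp⟩⟩
        · exact ⟨_, Finset.mem_inter.mpr ⟨h, by simp⟩⟩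
    have hcard : (((S ∩ {Sum.inl true, Sum.inl false}).card % 2 : ℕ) : ℝ)
        = bind' (xor (decide (Sum.inl true ∈ S)) (decide (Sum.inl false ∈ S))) := by
      by_cases ha : Sum.inl true ∈ S <;>
        by_cases hb : (Sum.inl false : Bool ⊕ (Fin r ⊕ Fin r)) ∈ S
      · have : S ∩ {Sum.inl true, Sum.inl false} = {Sum.inl true, Sum.inl false} := by
          apply Finset.inter_eq_right.mpr
          intro x hx
          simp only [Finset.mem_insert, Finset.mem_singleton] at hx
          rcases hx with rfl | rfl <;> assumption
        rw [this]; simp [ha, hb, bind']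
      · have : S ∩ {Sum.inl true, Sum.inl false} = {Sum.inl true} := by
          ext x
          simp only [Finset.mem_inter, Finset.mem_insert, Finset.mem_singleton]
          constructor
          · rintro ⟨hxS, rfl | rfl⟩
            · rfl
            · exact absurd hxS hb
          · rintro rfl; exact ⟨ha, Or.inl rfl⟩
        rw [this]; simp [ha, hb, bind']
      · have : S ∩ {Sum.inl true, Sum.inl false} = {Sum.inl false} := by
          ext x
          simp only [Finset.mem_inter, Finset.mem_insert, Finset.mem_singleton]
          constructor
          · rintro ⟨hxS, rfl | rfl⟩
            · exact absurd hxS ha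
            · rfl
          · rintro rfl; exact ⟨hb, Or.inr rfl⟩
        rw [this]; simp [ha, hb, bind']
      · have : S ∩ {Sum.inl true, Sum.inl false} = ∅ := by
          ext x
          simp only [Finset.mem_inter, Finset.mem_insert, Finset.mem_singleton,
            Finset.notMem_empty, iff_false, not_and]
          rintro hxS (rfl | rfl)
          · exact ha hxS
          · exact hb hxS
        rw [this]; simp [ha, hb, bind']
    rw [hcard]
    have hor : bind' (decide (Sum.inl true ∈ S) || decide ((Sum.inl false : Bool ⊕ (Fin r ⊕ Fin r)) ∈ S))
        = if (Sum.inl true ∈ S ∨ Sum.inl false ∈ S) then (1:ℝ) else 0 := by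
      by_cases h1 : Sum.inl true ∈ S <;>
        by_cases h2 : (Sum.inl false : Bool ⊕ (Fin r ⊕ Fin r)) ∈ S <;> simp [bind', h1, h2]
    simp only [g1, g2, bind'_decide, hne, hor]
    try ring
  -- implication helpers
  have himp : ∀ (x : Bool ⊕ (Fin r ⊕ Fin r)) (S T : Finset (Bool ⊕ (Fin r ⊕ Fin r))),
      S ⊆ T → (decide (x ∈ S) = true → decide (x ∈ T) = true) := by
    intro x S T h hx
    simp only [decide_eq_true_eq] at hx ⊢
    exact h hx
  have hexA : ∀ (S T : Finset (Bool ⊕ (Fin r ⊕ Fin r))), S ⊆ T →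
      (decide (∃ i : Fin r, Sum.inr (Sum.inl i) ∈ S) = true →
       decide (∃ i : Fin r, Sum.inr (Sum.inl i) ∈ T) = true) := by
    intro S T h hx
    simp only [decide_eq_true_eq] at hx ⊢
    obtain ⟨i, hi⟩ := hx
    exact ⟨i, h hi⟩
  have hexB : ∀ (S T : Finset (Bool ⊕ (Fin r ⊕ Fin r))), S ⊆ T →
      (decide (∃ i : Fin r, Sum.inr (Sum.inr i) ∈ S) = true →
       decide (∃ i : Fin r, Sum.inr (Sum.inr i) ∈ T) = true) := by
    intro S T h hx
    simp only [decide_eq_true_eq] at hx ⊢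
    obtain ⟨i, hi⟩ := hx
    exact ⟨i, h hi⟩
  refine ⟨?_, ?_, ?_⟩
  · -- non-negativity
    intro S
    rw [hF S]
    exact add_nonneg (mul_nonneg ha0 (g1_nonneg hm0 hm1 _ _))
      (mul_nonneg ha1' (add_nonneg (g2_nonneg hm0 hm1 _ _) (g2_nonneg hm0 hm1 _ _)))
  · -- m-monotonicity
    intro S T hST
    rw [hF S, hF T]
    have h1 := g1_mono hm0 hm1 _ _ _ _ (himp (Sum.inl true) S T hST) (himp (Sum.inl false) S T hST)
    have h2 := g2_mono hm0 hm1 _ _ _ _ (himp (Sum.inl true) _ _ hST) (hexA _ _ hST)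
    have h3 := g2_mono hm0 hm1 _ _ _ _ (himp (Sum.inl false) _ _ hST) (hexB _ _ hST)
    nlinarith [mul_le_mul_of_nonneg_left h1 ha0, mul_le_mul_of_nonneg_left h2 ha1',
      mul_le_mul_of_nonneg_left h3 ha1']
  · -- submodularity
    intro S T hST u hu
    have huS : u ∉ S := fun h => hu (hST h)
    rw [hF (insert u T), hF T, hF (insert u S), hF S]
    rcases u with bu | iu
    · cases bu
      · -- u = b = inl false
        have e1 : ∀ U : Finset (Bool ⊕ (Fin r ⊕ Fin r)),
            decide (Sum.inl true ∈ insert (Sum.inl false) U) = decide (Sum.inl true ∈ U) :=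
          fun U => decide_eq_decide.mpr (by simp)
        have e2 : ∀ U : Finset (Bool ⊕ (Fin r ⊕ Fin r)),
            decide ((Sum.inl false : Bool ⊕ (Fin r ⊕ Fin r)) ∈ insert (Sum.inl false) U) = true :=
          fun U => by simp
        have e3 : ∀ U : Finset (Bool ⊕ (Fin r ⊕ Fin r)),
            decide (∃ i : Fin r, Sum.inr (Sum.inl i) ∈ insert (Sum.inl false) U)
              = decide (∃ i : Fin r, Sum.inr (Sum.inl i) ∈ U) :=
          fun U => decide_eq_decide.mpr (by simp)
        have e4 : ∀ U : Finset (Bool ⊕ (Fin r ⊕ Fin r)),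
            decide (∃ i : Fin r, Sum.inr (Sum.inr i) ∈ insert (Sum.inl false) U)
              = decide (∃ i : Fin r, Sum.inr (Sum.inr i) ∈ U) :=
          fun U => decide_eq_decide.mpr (by simp)
        have eT : decide ((Sum.inl false : Bool ⊕ (Fin r ⊕ Fin r)) ∈ T) = false :=
          decide_eq_false hu
        have eS : decide ((Sum.inl false : Bool ⊕ (Fin r ⊕ Fin r)) ∈ S) = false :=
          decide_eq_false huS
        rw [e1 T, e2 T, e3 T, e4 T, e1 S, e2 S, e3 S, e4 S, eT, eS]
        have h1 := g1_submod_b hm0 hm1 _ _ (himp (Sum.inl true) _ _ hST)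
        have h2 := g2_submod_a hm0 hm1 _ _ (hexB _ _ hST)
        nlinarith [mul_le_mul_of_nonneg_left h1 ha0, mul_le_mul_of_nonneg_left h2 ha1']
      · -- u = a = inl true
        have e1 : ∀ U : Finset (Bool ⊕ (Fin r ⊕ Fin r)),
            decide ((Sum.inl false : Bool ⊕ (Fin r ⊕ Fin r)) ∈ insert (Sum.inl true) U)
              = decide ((Sum.inl false : Bool ⊕ (Fin r ⊕ Fin r)) ∈ U) :=
          fun U => decide_eq_decide.mpr (by simp)
        have e2 : ∀ U : Finset (Bool ⊕ (Fin r ⊕ Fin r)),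
            decide (Sum.inl true ∈ insert (Sum.inl true) U) = true :=
          fun U => by simp
        have e3 : ∀ U : Finset (Bool ⊕ (Fin r ⊕ Fin r)),
            decide (∃ i : Fin r, Sum.inr (Sum.inl i) ∈ insert (Sum.inl true) U)
              = decide (∃ i : Fin r, Sum.inr (Sum.inl i) ∈ U) :=
          fun U => decide_eq_decide.mpr (by simp)
        have e4 : ∀ U : Finset (Bool ⊕ (Fin r ⊕ Fin r)),
            decide (∃ i : Fin r, Sum.inr (Sum.inr i) ∈ insert (Sum.inl true) U)
              = decide (∃ i : Fin r, Sum.inr (Sum.inr i) ∈ U) :=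
          fun U => decide_eq_decide.mpr (by simp)
        have eT : decide (Sum.inl true ∈ T) = false := decide_eq_false hu
        have eS : decide (Sum.inl true ∈ S) = false := decide_eq_false huS
        rw [e1 T, e2 T, e3 T, e4 T, e1 S, e2 S, e3 S, e4 S, eT, eS]
        have h1 := g1_submod_a hm0 hm1 _ _ (himp (Sum.inl false) _ _ hST)
        have h2 := g2_submod_a hm0 hm1 _ _ (hexA _ _ hST)
        nlinarith [mul_le_mul_of_nonneg_left h1 ha0, mul_le_mul_of_nonneg_left h2 ha1']
    · rcases iu with i | i
      · -- u = aᵢ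
        have e1 : ∀ (x : Bool) (U : Finset (Bool ⊕ (Fin r ⊕ Fin r))),
            decide ((Sum.inl x : Bool ⊕ (Fin r ⊕ Fin r)) ∈ insert (Sum.inr (Sum.inl i)) U)
              = decide ((Sum.inl x : Bool ⊕ (Fin r ⊕ Fin r)) ∈ U) :=
          fun x U => decide_eq_decide.mpr (by simp)
        have e3 : ∀ U : Finset (Bool ⊕ (Fin r ⊕ Fin r)),
            decide (∃ j : Fin r, Sum.inr (Sum.inl j) ∈ insert (Sum.inr (Sum.inl i)) U) = true :=
          fun U => decide_eq_true ⟨i, Finset.mem_insert_self _ _⟩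
        have e4 : ∀ U : Finset (Bool ⊕ (Fin r ⊕ Fin r)),
            decide (∃ j : Fin r, Sum.inr (Sum.inr j) ∈ insert (Sum.inr (Sum.inl i)) U)
              = decide (∃ j : Fin r, Sum.inr (Sum.inr j) ∈ U) :=
          fun U => decide_eq_decide.mpr (by simp)
        rw [e1 true T, e1 false T, e3 T, e4 T, e1 true S, e1 false S, e3 S, e4 S]
        have h2 := g2_submod_i hm0 hm1 _ _ _ _ (himp (Sum.inl true) _ _ hST) (hexA _ _ hST)
        nlinarith [mul_le_mul_of_nonneg_left h2 ha1']
      · -- u = bᵢ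
        have e1 : ∀ (x : Bool) (U : Finset (Bool ⊕ (Fin r ⊕ Fin r))),
            decide ((Sum.inl x : Bool ⊕ (Fin r ⊕ Fin r)) ∈ insert (Sum.inr (Sum.inr i)) U)
              = decide ((Sum.inl x : Bool ⊕ (Fin r ⊕ Fin r)) ∈ U) :=
          fun x U => decide_eq_decide.mpr (by simp)
        have e3 : ∀ U : Finset (Bool ⊕ (Fin r ⊕ Fin r)),
            decide (∃ j : Fin r, Sum.inr (Sum.inl j) ∈ insert (Sum.inr (Sum.inr i)) U)
              = decide (∃ j : Fin r, Sum.inr (Sum.inl j) ∈ U) :=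
          fun U => decide_eq_decide.mpr (by simp)
        have e4 : ∀ U : Finset (Bool ⊕ (Fin r ⊕ Fin r)),
            decide (∃ j : Fin r, Sum.inr (Sum.inr j) ∈ insert (Sum.inr (Sum.inr i)) U) = true :=
          fun U => decide_eq_true ⟨i, Finset.mem_insert_self _ _⟩
        rw [e1 true T, e1 false T, e3 T, e4 T, e1 true S, e1 false S, e3 S, e4 S]
        have h2 := g2_submod_i hm0 hm1 _ _ _ _ (himp (Sum.inl false) _ _ hST) (hexB _ _ hST)
        nlinarith [mul_le_mul_of_nonneg_left h2 ha1']
end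

section
/- Let f be a non-negative m-monotone submodular set function on a finite ground set 𝒩, and let M = (𝒩, ℐ) be a matroid on 𝒩. Consider any run of the greedy algorithm for a matroid constraint: A₀ = ∅, and for i ≥ 0, if the set Cᵢ = {v ∈ 𝒩 ∖ Aᵢ : Aᵢ ∪ {v} ∈ ℐ} is nonempty and some element of Cᵢ has non-negative marginal contribution to Aᵢ, then A_{i+1} = Aᵢ ∪ {u_{i+1}} where u_{i+1} ∈ Cᵢ maximizes f(Aᵢ ∪ {u}) − f(Aᵢ) over u ∈ Cᵢ; otherwise the algorithm stops and outputs S = Aᵢ. Then, for every independent set O ∈ ℐ, the output S satisfies f(S) ≥ (m/2)·f(O). -/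
lemma stmt9_sum_union_bound {α : Type*} [Fintype α] [DecidableEq α] (f : Finset α → ℝ)
    (hsub : Submodular f) (S T : Finset α) :
    f (S ∪ T) ≤ f S + ∑ o ∈ T \ S, (f (insert o S) - f S) := by
  classical
  induction T using Finset.induction_on with
  | empty => simp
  | @insert a T ha ih =>
    by_cases haS : a ∈ S
    · have h1 : S ∪ insert a T = S ∪ T := by
        rw [Finset.union_insert, Finset.insert_eq_self.2 (Finset.mem_union_left _ haS)]
      have h2 : insert a T \ S = T \ S := Finset.insert_sdiff_of_mem _ haS
      rw [h1, h2]; exact ih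
    · have h2 : insert a T \ S = insert a (T \ S) := Finset.insert_sdiff_of_notMem _ haS
      have h3 : a ∉ S ∪ T := by simp [haS, ha]
      have key := hsub S (S ∪ T) Finset.subset_union_left a h3
      have h4 : a ∉ T \ S := by simp [ha]
      rw [h2, Finset.sum_insert h4, Finset.union_insert]
      have h5 : f (insert a (S ∪ T)) - f (S ∪ T) ≤ f (insert a S) - f S := key
      linarith

lemma stmt9_extend {α : Type*} [DecidableEq α] {I : Set (Finset α)}
    (hIexch : ∀ S T : Finset α, S ∈ I → T ∈ I → S.card < T.card →
      ∃ u ∈ T, u ∉ S ∧ insert u S ∈ I) :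
    ∀ (k : ℕ) (Z Y : Finset α), Z ∈ I → Y ∈ I → Y.card ≤ Z.card + k →
      ∃ W, W ∈ I ∧ Z ⊆ W ∧ W ⊆ Z ∪ Y ∧ Y.card ≤ W.card := by
  intro k
  induction k with
  | zero => intro Z Y hZ _ h
            exact ⟨Z, hZ, subset_rfl, Finset.subset_union_left, by omega⟩
  | succ k ih =>
    intro Z Y hZ hY h
    by_cases hc : Y.card ≤ Z.card
    · exact ⟨Z, hZ, subset_rfl, Finset.subset_union_left, hc⟩
    · obtain ⟨v, hvY, hvZ, hins⟩ := hIexch Z Y hZ hY (by omega)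
      obtain ⟨W, hW, hsub1, hsub2, hcard⟩ := ih (insert v Z) Y hins hY
        (by rw [Finset.card_insert_of_notMem hvZ]; omega)
      refine ⟨W, hW, (Finset.subset_insert v Z).trans hsub1, hsub2.trans ?_, hcard⟩
      exact Finset.union_subset
        (Finset.insert_subset (Finset.mem_union_right _ hvY) Finset.subset_union_left)
        Finset.subset_union_right

lemma stmt9_sum_assign {β : Type*} [DecidableEq β] :
    ∀ (N : ℕ) (g : ℕ → ℝ) (K : Finset β) (ℓ : β → ℕ) (w : β → ℝ),
    (∀ i j, i ≤ j → j < N → g j ≤ g i) →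
    (∀ i, i < N → 0 ≤ g i) →
    (∀ o ∈ K, ℓ o < N) →
    (∀ o ∈ K, w o ≤ g (ℓ o)) →
    (∀ i, (K.filter fun o => ℓ o < i).card ≤ i) →
    ∑ o ∈ K, w o ≤ ∑ i ∈ Finset.range N, g i := by
  intro N
  induction N with
  | zero =>
    intro g K ℓ w _ _ hK _ _
    have : K = ∅ := Finset.eq_empty_of_forall_notMem fun o ho => Nat.not_lt_zero _ (hK o ho)
    simp [this]
  | succ N ih =>
    intro g K ℓ w hanti hnn hKlt hKw hcount
    rcases K.eq_empty_or_nonempty with hK | hK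
    · rw [hK]
      simp only [Finset.sum_empty]
      exact Finset.sum_nonneg fun i hi => hnn i (Finset.mem_range.1 hi)
    · obtain ⟨o₀, ho₀, hmin⟩ := K.exists_min_image ℓ hK
      have hge1 : ∀ o ∈ K.erase o₀, 1 ≤ ℓ o := by
        intro o ho
        by_contra h
        have h0 : ℓ o = 0 := by omega
        have h00 : ℓ o₀ = 0 := by
          have := hmin o (Finset.mem_of_mem_erase ho); omega
        have hne : o ≠ o₀ := Finset.ne_of_mem_erase ho
        have hsub2 : ({o₀, o} : Finset β) ⊆ K.filter (fun x => ℓ x < 1) := by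
          intro x hx
          simp only [Finset.mem_insert, Finset.mem_singleton] at hx
          rcases hx with rfl | rfl
          · exact Finset.mem_filter.2 ⟨ho₀, by omega⟩
          · exact Finset.mem_filter.2 ⟨Finset.mem_of_mem_erase ho, by omega⟩
        have hc2 : ({o₀, o} : Finset β).card = 2 := by
          rw [Finset.card_insert_of_notMem (by simp [hne.symm]), Finset.card_singleton]
        have := Finset.card_le_card hsub2
        have := hcount 1
        omega
      have hcount' : ∀ i, ((K.erase o₀).filter fun o => ℓ o - 1 < i).card ≤ i := by
        intro i
        have hsubf : (K.erase o₀).filter (fun o => ℓ o - 1 < i) ⊆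
            (K.filter fun o => ℓ o < i + 1).erase o₀ := by
          intro x hx
          simp only [Finset.mem_filter, Finset.mem_erase] at hx ⊢
          exact ⟨hx.1.1, hx.1.2, by omega⟩
        refine (Finset.card_le_card hsubf).trans ?_
        by_cases hmem : o₀ ∈ K.filter fun o => ℓ o < i + 1
        · rw [Finset.card_erase_of_mem hmem]
          have := hcount (i + 1); omega
        · have : (K.filter fun o => ℓ o < i + 1) = ∅ := by
            refine Finset.eq_empty_of_forall_notMem fun x hx => hmem ?_
            have hx' := Finset.mem_filter.1 hx
            exact Finset.mem_filter.2 ⟨ho₀, lt_of_le_of_lt (hmin x hx'.1) hx'.2⟩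
          rw [this]; simp
      have step := ih (fun i => g (i + 1)) (K.erase o₀) (fun o => ℓ o - 1) w
        (fun i j hij hj => hanti (i + 1) (j + 1) (by omega) (by omega))
        (fun i hi => hnn (i + 1) (by omega))
        (fun o ho => by
          have h1 := hKlt o (Finset.mem_of_mem_erase ho)
          have h2 := hge1 o ho
          show ℓ o - 1 < N
          omega)
        (fun o ho => by
          have h1 := hge1 o ho
          have h2 := hKw o (Finset.mem_of_mem_erase ho)
          simpa [Nat.sub_add_cancel h1] using h2)
        hcount'
      have hsplit : ∑ o ∈ K, w o = w o₀ + ∑ o ∈ K.erase o₀, w o :=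
        (Finset.add_sum_erase K w ho₀).symm
      have hrange : ∑ i ∈ Finset.range (N + 1), g i = (∑ i ∈ Finset.range N, g (i + 1)) + g 0 :=
        Finset.sum_range_succ' g N
      have hw0 : w o₀ ≤ g 0 :=
        (hKw o₀ ho₀).trans (hanti 0 (ℓ o₀) (Nat.zero_le _) (hKlt o₀ ho₀))
      rw [hsplit, hrange]
      linarith

/-- the greedy algorithm for a matroid constraint `(𝒩, ℐ)` applied to a
non-negative `m`-monotone submodular function.  At every step `i < N`, the element `u (i+1)`
belongs to `Cᵢ = {v ∉ Aᵢ : Aᵢ ∪ {v} ∈ ℐ}`, maximizes the marginal contribution over `Cᵢ`, has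
non-negative marginal contribution, and is added to the solution; at step `N` the algorithm
stops because every element of `C_N` has negative marginal contribution.  Then the output
`A N` satisfies `f(A N) ≥ (m/2)·f(O)` for every independent set `O ∈ ℐ`. -/
theorem stmt9 {α : Type*} [Fintype α] [DecidableEq α]
    (m : ℝ) (hm : m ∈ Set.Icc (0 : ℝ) 1)
    (f : Finset α → ℝ)
    (hnn : ∀ S : Finset α, 0 ≤ f S)
    (hsub : Submodular f)
    (hmon : MMonotone m f)
    (I : Set (Finset α)) (hIne : I.Nonempty)
    (hIdown : ∀ S T : Finset α, S ⊆ T → T ∈ I → S ∈ I)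
    (hIexch : ∀ S T : Finset α, S ∈ I → T ∈ I → S.card < T.card →
      ∃ u ∈ T, u ∉ S ∧ insert u S ∈ I)
    (A : ℕ → Finset α) (u : ℕ → α) (N : ℕ)
    (hA0 : A 0 = ∅)
    (hstep : ∀ i < N,
      (u (i + 1) ∉ A i ∧ insert (u (i + 1)) (A i) ∈ I) ∧
      (∀ v, v ∉ A i → insert v (A i) ∈ I →
        f (insert v (A i)) - f (A i) ≤ f (insert (u (i + 1)) (A i)) - f (A i)) ∧
      0 ≤ f (insert (u (i + 1)) (A i)) - f (A i) ∧
      A (i + 1) = insert (u (i + 1)) (A i))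
    (hstop : ∀ v, v ∉ A N → insert v (A N) ∈ I →
      f (insert v (A N)) - f (A N) < 0)
    (O : Finset α) (hO : O ∈ I) :
    (m / 2) * f O ≤ f (A N) := by
  classical
  have hAstep : ∀ i, i < N → A (i + 1) = insert (u (i + 1)) (A i) :=
    fun i hi => (hstep i hi).2.2.2
  have hAnot : ∀ i, i < N → u (i + 1) ∉ A i := fun i hi => (hstep i hi).1.1
  have hAmono : ∀ j, j ≤ N → ∀ i, i ≤ j → A i ⊆ A j := by
    intro j
    induction j with
    | zero =>
      intro _ i hi
      have h0 : i = 0 := by omega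
      rw [h0]
    | succ j ih =>
      intro hj i hi
      by_cases hij : i = j + 1
      · subst hij; exact subset_rfl
      · have hi' : i ≤ j := by omega
        refine (ih (by omega) i hi').trans ?_
        rw [hAstep j (by omega)]
        exact Finset.subset_insert _ _
  obtain ⟨J0, hJ0⟩ := hIne
  have hempty : (∅ : Finset α) ∈ I := hIdown ∅ J0 (Finset.empty_subset _) hJ0
  have hAmemI : ∀ i, i ≤ N → A i ∈ I := by
    intro i hi
    rcases Nat.eq_zero_or_pos i with h0 | hpos
    · subst h0; rw [hA0]; exact hempty
    · obtain ⟨j, rfl⟩ : ∃ j, i = j + 1 := ⟨i - 1, by omega⟩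
      rw [hAstep j (by omega)]
      exact (hstep j (by omega)).1.2
  have hAcard : ∀ i, i ≤ N → (A i).card = i := by
    intro i
    induction i with
    | zero => intro _; rw [hA0]; simp
    | succ i ih =>
      intro hi
      rw [hAstep i (by omega), Finset.card_insert_of_notMem (hAnot i (by omega)),
        ih (by omega)]
  -- gains are nonnegative and non-increasing
  have hgnn : ∀ i, i < N → 0 ≤ f (A (i + 1)) - f (A i) := by
    intro i hi
    rw [hAstep i hi]
    exact (hstep i hi).2.2.1
  have hgadj : ∀ j, j + 1 < N → f (A (j + 1 + 1)) - f (A (j + 1)) ≤ f (A (j + 1)) - f (A j) := by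
    intro j hj
    have hjN : j < N := by omega
    have h1 := hstep (j + 1) hj
    have hsubAA : A j ⊆ A (j + 1) := hAmono (j + 1) (by omega) j (by omega)
    have hv_not : u (j + 1 + 1) ∉ A j := fun h => h1.1.1 (hsubAA h)
    have hv_ind : insert (u (j + 1 + 1)) (A j) ∈ I := by
      refine hIdown _ (insert (u (j + 1 + 1)) (A (j + 1))) ?_ h1.1.2
      exact Finset.insert_subset_insert _ hsubAA
    have hgreedy := (hstep j hjN).2.1 (u (j + 1 + 1)) hv_not hv_ind
    have hsubm := hsub (A j) (A (j + 1)) hsubAA (u (j + 1 + 1)) h1.1.1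
    have e1 : f (A (j + 1)) = f (insert (u (j + 1)) (A j)) := by rw [hAstep j hjN]
    have e2 : f (A (j + 1 + 1)) = f (insert (u (j + 1 + 1)) (A (j + 1))) := by
      rw [h1.2.2.2]
    linarith
  have hganti : ∀ i j, i ≤ j → j < N → f (A (j + 1)) - f (A j) ≤ f (A (i + 1)) - f (A i) := by
    intro i j hij
    induction j, hij using Nat.le_induction with
    | base => intro _; exact le_rfl
    | succ j hij ih =>
      intro hjN
      exact (hgadj j hjN).trans (ih (by omega))
  -- the level function
  have hex : ∀ o, o ∈ O → ∃ l, l ≤ N ∧ insert o (A l) ∈ I ∧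
      ∀ i, l < i → i ≤ N → insert o (A i) ∉ I := by
    intro o ho
    have hP0 : insert o (A 0) ∈ I := by
      rw [hA0]
      exact hIdown {o} O (Finset.singleton_subset_iff.2 ho) hO
    exact ⟨Nat.findGreatest (fun i => insert o (A i) ∈ I) N, Nat.findGreatest_le N,
      Nat.findGreatest_spec (P := fun i => insert o (A i) ∈ I) (Nat.zero_le N) hP0,
      fun i h1 h2 => Nat.findGreatest_is_greatest (P := fun i => insert o (A i) ∈ I) h1 h2⟩
  choose! ℓ hℓle hℓspec hℓgr using hex
  -- counting bound via matroid exchange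
  have hcount : ∀ i, i ≤ N → ((O \ A N).filter fun o => ℓ o < i).card ≤ i := by
    intro i hiN
    obtain ⟨W, hWI, hAW, hWsub, hWcard⟩ :=
      stmt9_extend hIexch O.card (A i) O (hAmemI i hiN) hO (by omega)
    have hsubOW : ((O \ A N).filter fun o => ℓ o < i) ⊆ O \ W := by
      intro o ho
      simp only [Finset.mem_filter, Finset.mem_sdiff] at ho ⊢
      refine ⟨ho.1.1, fun hoW => ?_⟩
      have hins : insert o (A i) ∈ I := hIdown _ W (Finset.insert_subset hoW hAW) hWI
      exact hℓgr o ho.1.1 i ho.2 hiN hins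
    have h1 : (O ∩ W).card + (O \ W).card = O.card := Finset.card_inter_add_card_sdiff O W
    have h2 : (W ∩ O).card + (W \ O).card = W.card := Finset.card_inter_add_card_sdiff W O
    have h3 : W \ O ⊆ A i := by
      intro x hx
      have hx' := Finset.mem_sdiff.1 hx
      rcases Finset.mem_union.1 (hWsub hx'.1) with h | h
      · exact h
      · exact absurd h hx'.2
    have h4 : (W \ O).card ≤ i := by
      have hh := Finset.card_le_card h3
      rw [hAcard i hiN] at hh
      exact hh
    have h5 : (W ∩ O).card = (O ∩ W).card := by rw [Finset.inter_comm]
    have h6 := Finset.card_le_card hsubOW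
    omega
  -- the good set K and the rest
  set K : Finset α := (O \ A N).filter (fun o => ℓ o < N) with hKdef
  have hKw : ∀ o ∈ K, f (insert o (A N)) - f (A N) ≤ f (A (ℓ o + 1)) - f (A (ℓ o)) := by
    intro o ho
    have ho' := Finset.mem_filter.1 ho
    have hoO : o ∈ O := (Finset.mem_sdiff.1 ho'.1).1
    have hoA : o ∉ A N := (Finset.mem_sdiff.1 ho'.1).2
    have hlt : ℓ o < N := ho'.2
    have hsubAA : A (ℓ o) ⊆ A N := hAmono N le_rfl (ℓ o) (hℓle o hoO)
    have hs := hsub (A (ℓ o)) (A N) hsubAA o hoA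
    have hoA' : o ∉ A (ℓ o) := fun h => hoA (hsubAA h)
    have hg := (hstep (ℓ o) hlt).2.1 o hoA' (hℓspec o hoO)
    have e : f (A (ℓ o + 1)) = f (insert (u (ℓ o + 1)) (A (ℓ o))) := by
      rw [hAstep (ℓ o) hlt]
    linarith
  have hKlt : ∀ o ∈ K, ℓ o < N := fun o ho => (Finset.mem_filter.1 ho).2
  have hcount' : ∀ i, (K.filter fun o => ℓ o < i).card ≤ i := by
    intro i
    rcases le_or_gt i N with hi | hi
    · have hsubK : K.filter (fun o => ℓ o < i) ⊆ (O \ A N).filter (fun o => ℓ o < i) :=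
        Finset.filter_subset_filter _ (Finset.filter_subset _ _)
      exact (Finset.card_le_card hsubK).trans (hcount i hi)
    · have : K.filter (fun o => ℓ o < i) ⊆ K := Finset.filter_subset _ _
      refine (Finset.card_le_card this).trans ?_
      exact (hcount N le_rfl).trans (by omega)
  have hsum1 : ∑ o ∈ K, (f (insert o (A N)) - f (A N)) ≤
      ∑ i ∈ Finset.range N, (f (A (i + 1)) - f (A i)) :=
    stmt9_sum_assign N (fun i => f (A (i + 1)) - f (A i)) K ℓ
      (fun o => f (insert o (A N)) - f (A N)) hganti hgnn hKlt hKw hcount'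
  have htel : ∑ i ∈ Finset.range N, (f (A (i + 1)) - f (A i)) = f (A N) - f (A 0) :=
    Finset.sum_range_sub (fun i => f (A i)) N
  have hsplit := Finset.sum_filter_add_sum_filter_not (O \ A N) (fun o => ℓ o < N)
    (fun o => f (insert o (A N)) - f (A N))
  have hneg : ∑ o ∈ (O \ A N).filter (fun o => ¬ ℓ o < N),
      (f (insert o (A N)) - f (A N)) ≤ 0 := by
    refine Finset.sum_nonpos fun o ho => ?_
    have ho' := Finset.mem_filter.1 ho
    have hoO : o ∈ O := (Finset.mem_sdiff.1 ho'.1).1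
    have hoA : o ∉ A N := (Finset.mem_sdiff.1 ho'.1).2
    have hN : ℓ o = N := by have := hℓle o hoO; omega
    have hins : insert o (A N) ∈ I := by rw [← hN]; exact hℓspec o hoO
    exact le_of_lt (hstop o hoA hins)
  have hub := stmt9_sum_union_bound f hsub (A N) O
  have hm2 : m * f O ≤ f (A N ∪ O) := hmon O (A N ∪ O) Finset.subset_union_right
  have h0 : 0 ≤ f (A 0) := by rw [hA0]; exact hnn ∅
  have htot : ∑ o ∈ O \ A N, (f (insert o (A N)) - f (A N)) ≤ f (A N) - f (A 0) := by
    rw [← hsplit]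
    have := htel ▸ hsum1
    linarith
  linarith
end

section
/- Let T ≥ 0, V ≥ 0 and m ∈ [0,1], and let g: [0, T] → ℝ be a differentiable function with g(0) ≥ 0 whose derivative satisfies g′(t) ≥ (m + (1 − m)e^{−t})·V − g(t) for every t ∈ [0, T]. Then g(T) ≥ [m·(1 − e^{−T}) + (1 − m)·T·e^{−T}]·V. -/
/-! Multiplying by the integrating factor `eᵗ` turns `g′ + g ≥ h` into `(eᵗ g)′ ≥ eᵗ h`.
For `h(t) = (m + (1 − m)e^{−t})V` the right-hand side is the derivative of
`H(t) = V(m eᵗ + (1 − m)t)`, so `eᵗ g − H` is nondecreasing on `[0, T]`. Comparing its values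
at `0` and `T` and using `g(0) ≥ 0` gives `e^T g(T) ≥ V(m(e^T − 1) + (1 − m)T)`. -/

open Real Set

theorem monotoneOn_exp_mul_sub_of_sub_le_deriv {D : Set ℝ} (hD : Convex ℝ D) {g h H : ℝ → ℝ}
    (hg : ∀ t ∈ D, DifferentiableAt ℝ g t) (hH : ∀ t ∈ D, HasDerivAt H (exp t * h t) t)
    (hle : ∀ t ∈ D, h t - g t ≤ deriv g t) :
    MonotoneOn (fun t => exp t * g t - H t) D := by
  have hderiv : ∀ t ∈ D, HasDerivAt (fun t => exp t * g t - H t)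
      (exp t * (g t + deriv g t - h t)) t := fun t ht =>
    (((hasDerivAt_exp t).mul (hg t ht).hasDerivAt).sub (hH t ht)).congr_deriv (by ring)
  refine monotoneOn_of_hasDerivWithinAt_nonneg hD
    (fun t ht => (hderiv t ht).continuousAt.continuousWithinAt)
    (fun t ht => (hderiv t (interior_subset ht)).hasDerivWithinAt) fun t ht => ?_
  have := hle t (interior_subset ht)
  exact mul_nonneg (exp_pos t).le (by linarith)

theorem hasDerivAt_mul_mul_exp_add_mul (V m t : ℝ) :
    HasDerivAt (fun s => V * (m * exp s + (1 - m) * s))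
      (exp t * ((m + (1 - m) * exp (-t)) * V)) t := by
  have := (((hasDerivAt_exp t).const_mul m).add ((hasDerivAt_id t).const_mul (1 - m))).const_mul V
  refine this.congr_deriv ?_
  rw [exp_neg]
  field_simp

theorem stmt11_general (T V m : ℝ) (hT : 0 ≤ T)
    (g : ℝ → ℝ) (hg0 : 0 ≤ g 0)
    (hdiff : ∀ t ∈ Set.Icc (0 : ℝ) T, DifferentiableAt ℝ g t)
    (hge : ∀ t ∈ Set.Icc (0 : ℝ) T, (m + (1 - m) * Real.exp (-t)) * V - g t ≤ deriv g t) :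
    (m * (1 - Real.exp (-T)) + (1 - m) * T * Real.exp (-T)) * V ≤ g T := by
  have hmono := monotoneOn_exp_mul_sub_of_sub_le_deriv (convex_Icc 0 T) hdiff
    (fun t _ => hasDerivAt_mul_mul_exp_add_mul V m t) hge (left_mem_Icc.2 hT)
    (right_mem_Icc.2 hT) hT
  simp only [exp_zero, one_mul, mul_zero, add_zero, mul_one] at hmono
  have hscale : exp T * ((m * (1 - exp (-T)) + (1 - m) * T * exp (-T)) * V)
      = V * (m * exp T + (1 - m) * T) - V * m := by
    rw [exp_neg]
    field_simp
    ring
  refine le_of_mul_le_mul_left ?_ (exp_pos T)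
  linarith

/-- if `g` is differentiable on `[0, T]` with `g(0) ≥ 0` and
`g′(t) ≥ (m + (1 − m)e^{−t})·V − g(t)` there, then
`g(T) ≥ [m(1 − e^{−T}) + (1 − m)·T·e^{−T}]·V`. -/
theorem stmt11 (T V m : ℝ) (hT : 0 ≤ T) (hV : 0 ≤ V) (hm : m ∈ Set.Icc (0 : ℝ) 1)
    (g : ℝ → ℝ) (hg0 : 0 ≤ g 0)
    (hdiff : ∀ t ∈ Set.Icc (0 : ℝ) T, DifferentiableAt ℝ g t)
    (hge : ∀ t ∈ Set.Icc (0 : ℝ) T, (m + (1 - m) * Real.exp (-t)) * V - g t ≤ deriv g t) :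
    (m * (1 - Real.exp (-T)) + (1 - m) * T * Real.exp (-T)) * V ≤ g T :=
  stmt11_general T V m hT g hg0 hdiff hge
end

section
/- For every integer k ≥ 4 and every integer i ≥ 1, e^{−2i/k} ≤ (1 − 2/k)^i + (4i/k²)·e^{−(i−1)/k}, and moreover (4i/k²)·e^{−(i−1)/k} ≤ (16e^{−2}/i)·e^{1/k}; consequently (1 − 2/k)^{i−1} ≥ (1 − 2/k)^i ≥ e^{−2i/k} − (16e^{−2}/i)·e^{1/k}. -/

lemma aux_pow (a b : ℝ) (hb : 0 ≤ b) (hba : b ≤ a) :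
    ∀ n : ℕ, a ^ n ≤ b ^ n + n * (a - b) * a ^ (n - 1) := by
  intro n
  induction n with
  | zero => simp
  | succ n ih =>
    rcases Nat.eq_zero_or_pos n with h | h
    · subst h; simp
    have ha : 0 ≤ a := hb.trans hba
    have hbn : b ^ n ≤ a ^ n := pow_le_pow_left₀ hb hba n
    have hkey : a * a ^ (n - 1) = a ^ n := by
      rw [← pow_succ', Nat.sub_add_cancel h]
    have hab : 0 ≤ a - b := sub_nonneg.mpr hba
    calc a ^ (n + 1) = a * a ^ n := by ring
      _ ≤ a * (b ^ n + n * (a - b) * a ^ (n - 1)) := by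
          apply mul_le_mul_of_nonneg_left ih ha
      _ = a * b ^ n + n * (a - b) * (a * a ^ (n - 1)) := by ring
      _ = b * b ^ n + (a - b) * b ^ n + n * (a - b) * a ^ n := by rw [hkey]; ring
      _ ≤ b * b ^ n + (a - b) * a ^ n + n * (a - b) * a ^ n := by gcongr
      _ = b ^ (n + 1) + (n + 1 : ℕ) * (a - b) * a ^ ((n+1) - 1) := by
          push_cast; ring_nf

set_option maxHeartbeats 1000000 in
/-- for integers `k ≥ 4` and `i ≥ 1`:
`e^{−2i/k} ≤ (1 − 2/k)^i + (4i/k²)e^{−(i−1)/k}`,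
`(4i/k²)e^{−(i−1)/k} ≤ (16e^{−2}/i)e^{1/k}`, and consequently
`(1 − 2/k)^{i−1} ≥ (1 − 2/k)^i ≥ e^{−2i/k} − (16e^{−2}/i)e^{1/k}`. -/
theorem stmt14 (k i : ℕ) (hk : 4 ≤ k) (hi : 1 ≤ i) :
    Real.exp (-(2 * (i : ℝ) / (k : ℝ)))
        ≤ (1 - 2 / (k : ℝ)) ^ i
          + (4 * (i : ℝ) / (k : ℝ) ^ 2) * Real.exp (-(((i : ℝ) - 1) / (k : ℝ))) ∧
    (4 * (i : ℝ) / (k : ℝ) ^ 2) * Real.exp (-(((i : ℝ) - 1) / (k : ℝ)))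
        ≤ (16 * Real.exp (-2) / (i : ℝ)) * Real.exp (1 / (k : ℝ)) ∧
    Real.exp (-(2 * (i : ℝ) / (k : ℝ)))
          - (16 * Real.exp (-2) / (i : ℝ)) * Real.exp (1 / (k : ℝ))
        ≤ (1 - 2 / (k : ℝ)) ^ i ∧
    (1 - 2 / (k : ℝ)) ^ i ≤ (1 - 2 / (k : ℝ)) ^ (i - 1) := by
  have hk4 : (4 : ℝ) ≤ (k : ℝ) := by exact_mod_cast hk
  have hk0 : (0 : ℝ) < (k : ℝ) := by linarith
  have hi1 : (1 : ℝ) ≤ (i : ℝ) := by exact_mod_cast hi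
  have hi0 : (0 : ℝ) < (i : ℝ) := by linarith
  set x : ℝ := 2 / (k : ℝ) with hx
  have hx0 : 0 < x := by positivity
  have hxh : x ≤ 1 / 2 := by
    rw [hx, div_le_div_iff₀ hk0 (by norm_num)]; linarith
  set a : ℝ := Real.exp (-x) with hadef
  set b : ℝ := 1 - x with hbdef
  have hb0 : 0 ≤ b := by rw [hbdef]; linarith
  have hb1 : b ≤ 1 := by rw [hbdef]; linarith
  have hba : b ≤ a := by
    have := Real.add_one_le_exp (-x); rw [hadef, hbdef]; linarith
  have ha0 : 0 < a := Real.exp_pos _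
  -- upper bound a ≤ b + x^2
  have hup : a ≤ b + x ^ 2 := by
    have h1 : (1 : ℝ) + x ≤ Real.exp x := by
      have := Real.add_one_le_exp x; linarith
    have h1p : (0 : ℝ) < 1 + x := by linarith
    have h2 : a ≤ (1 + x)⁻¹ := by
      rw [hadef, Real.exp_neg]
      exact inv_anti₀ h1p h1
    have h3 : (1 + x)⁻¹ ≤ b + x ^ 2 := by
      rw [inv_le_iff_one_le_mul₀ h1p, hbdef]
      nlinarith [sq_nonneg x, hx0.le]
    linarith
  -- a^i = exp(-(2i/k))
  have hai : a ^ i = Real.exp (-(2 * (i : ℝ) / (k : ℝ))) := by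
    rw [hadef, ← Real.exp_nat_mul]
    congr 1
    rw [hx]; ring
  -- a^(i-1) ≤ exp(-((i-1)/k))
  have hcast : ((i - 1 : ℕ) : ℝ) = (i : ℝ) - 1 := by
    have : (1 : ℕ) ≤ i := hi
    push_cast [Nat.cast_sub this]; ring
  have haim : a ^ (i - 1) ≤ Real.exp (-(((i : ℝ) - 1) / (k : ℝ))) := by
    rw [hadef, ← Real.exp_nat_mul, hcast]
    apply Real.exp_le_exp.mpr
    rw [hx]
    have heq : ((i:ℝ) - 1) * -(2 / (k:ℝ)) = -(2 * ((i:ℝ) - 1) / (k:ℝ)) := by ring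
    rw [heq, neg_le_neg_iff]
    gcongr
    linarith
  -- Part 1
  have part1 : Real.exp (-(2 * (i : ℝ) / (k : ℝ)))
      ≤ (1 - 2 / (k : ℝ)) ^ i
        + (4 * (i : ℝ) / (k : ℝ) ^ 2) * Real.exp (-(((i : ℝ) - 1) / (k : ℝ))) := by
    have h := aux_pow a b hb0 hba i
    have hx2 : x ^ 2 = 4 / (k : ℝ) ^ 2 := by rw [hx]; field_simp; ring
    have hab2 : a - b ≤ x ^ 2 := by linarith
    have hmid : (i : ℝ) * (a - b) * a ^ (i - 1)
        ≤ (4 * (i : ℝ) / (k : ℝ) ^ 2) * Real.exp (-(((i : ℝ) - 1) / (k : ℝ))) := by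
      have hstep : (i : ℝ) * (a - b) * a ^ (i - 1)
          ≤ (i : ℝ) * x ^ 2 * Real.exp (-(((i : ℝ) - 1) / (k : ℝ))) := by
        have hpow0 : 0 ≤ a ^ (i - 1) := by positivity
        have hab0 : 0 ≤ a - b := by linarith
        apply mul_le_mul (by nlinarith) haim hpow0 (by positivity)
      calc (i : ℝ) * (a - b) * a ^ (i - 1)
          ≤ (i : ℝ) * x ^ 2 * Real.exp (-(((i : ℝ) - 1) / (k : ℝ))) := hstep
        _ = (4 * (i : ℝ) / (k : ℝ) ^ 2) * Real.exp (-(((i : ℝ) - 1) / (k : ℝ))) := by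
            rw [hx2]; ring
    rw [← hai]
    calc a ^ i ≤ b ^ i + (i : ℝ) * (a - b) * a ^ (i - 1) := h
      _ ≤ b ^ i + (4 * (i : ℝ) / (k : ℝ) ^ 2) * Real.exp (-(((i : ℝ) - 1) / (k : ℝ))) := by
          linarith
  -- Part 2
  have part2 : (4 * (i : ℝ) / (k : ℝ) ^ 2) * Real.exp (-(((i : ℝ) - 1) / (k : ℝ)))
      ≤ (16 * Real.exp (-2) / (i : ℝ)) * Real.exp (1 / (k : ℝ)) := by
    set t : ℝ := (i : ℝ) / (k : ℝ) with ht
    have ht0 : 0 < t := by positivity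
    have hsplit : Real.exp (-(((i : ℝ) - 1) / (k : ℝ)))
        = Real.exp (-t) * Real.exp (1 / (k : ℝ)) := by
      rw [← Real.exp_add]; congr 1; rw [ht]; field_simp; ring
    have hkey : t ^ 2 * Real.exp (-t) ≤ 4 * Real.exp (-2) := by
      have h1 : t / 2 ≤ Real.exp (t / 2 - 1) := by
        have := Real.add_one_le_exp (t / 2 - 1); linarith
      have h2 : (t / 2) ^ 2 ≤ Real.exp (t / 2 - 1) ^ 2 := by
        apply pow_le_pow_left₀ (by linarith) h1
      have h3 : Real.exp (t / 2 - 1) ^ 2 = Real.exp (t - 2) := by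
        rw [← Real.exp_nat_mul]; congr 1; push_cast; ring
      have h4 : Real.exp (t - 2) = Real.exp t * Real.exp (-2) := by
        rw [Real.exp_sub, Real.exp_neg, div_eq_mul_inv]
      have h5 : t ^ 2 ≤ 4 * Real.exp t * Real.exp (-2) := by
        rw [h3, h4] at h2; nlinarith
      have h6 : Real.exp (-t) = (Real.exp t)⁻¹ := Real.exp_neg t
      rw [h6, inv_eq_one_div, mul_one_div, div_le_iff₀ (Real.exp_pos t)]
      have hcomm : 4 * Real.exp t * Real.exp (-2) = 4 * Real.exp (-2) * Real.exp t := by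
        ring
      linarith [h5]
    have hiner : 4 * (i : ℝ) / (k : ℝ) ^ 2 * Real.exp (-t)
        ≤ 16 * Real.exp (-2) / (i : ℝ) := by
      rw [div_mul_eq_mul_div, div_le_div_iff₀ (by positivity) hi0]
      have : 4 * (i : ℝ) * Real.exp (-t) * (i : ℝ)
          = 4 * (t ^ 2 * Real.exp (-t)) * (k : ℝ) ^ 2 := by
        rw [ht]; field_simp
      rw [this]
      have hm := mul_le_mul_of_nonneg_right hkey (sq_nonneg (k:ℝ))
      nlinarith [hm]
    rw [hsplit, ← mul_assoc]
    apply mul_le_mul_of_nonneg_right hiner (Real.exp_pos _).le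
  refine ⟨part1, part2, by linarith, ?_⟩
  exact pow_le_pow_of_le_one hb0 hb1 (Nat.sub_le i 1)
end

section
/- Let k ≥ 2 and T ≥ 0 be integers, let m ∈ [0,1], let V ≥ 0, and let a₀, a₁, …, a_T be real numbers with a₀ ≥ 0 and, for every integer 1 ≤ i ≤ T, aᵢ ≥ (1 − 2/k)·a_{i−1} + (1/(2k))·(1 + m + (1 − m)(1 − 2/k)^{i−1})·V. Then for every integer 0 ≤ i ≤ T, aᵢ ≥ [((1 + m)/4)·(1 − (1 − 2/k)^i) + ((1 − m)·i/(2k))·(1 − 2/k)^{i−1}]·V. -/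
/-!
The right-hand side `bᵢ · V` satisfies the recursion with equality and `b₀ = 0`; since the
coefficient `1 − 2/k` is nonnegative, any sequence obeying the recursive inequality stays above
the exact solution, by induction on `i`.
-/

theorem le_of_linear_recurrence_s15 {α : Type*} [Semiring α] [PartialOrder α] [IsOrderedRing α]
    {a b d : ℕ → α} {c : α} {T : ℕ} (hc : 0 ≤ c) (h₀ : b 0 ≤ a 0)
    (hb : ∀ i < T, b (i + 1) = c * b i + d i) (ha : ∀ i < T, c * a i + d i ≤ a (i + 1)) :
    ∀ i ≤ T, b i ≤ a i := by
  intro i hi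
  induction i with
  | zero => exact h₀
  | succ i ih =>
    calc b (i + 1) = c * b i + d i := hb i hi
      _ ≤ c * a i + d i := by gcongr; exact ih (by omega)
      _ ≤ a (i + 1) := ha i hi

noncomputable def randomGreedyBound (k m : ℝ) (i : ℕ) : ℝ :=
  ((1 + m) / 4) * (1 - (1 - 2 / k) ^ i) + ((1 - m) * i / (2 * k)) * (1 - 2 / k) ^ (i - 1)

@[simp]
theorem randomGreedyBound_zero (k m : ℝ) : randomGreedyBound k m 0 = 0 := by
  simp [randomGreedyBound]

theorem randomGreedyBound_succ (k m : ℝ) (i : ℕ) :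
    randomGreedyBound k m (i + 1) = (1 - 2 / k) * randomGreedyBound k m i
      + (1 / (2 * k)) * (1 + m + (1 - m) * (1 - 2 / k) ^ i) := by
  unfold randomGreedyBound
  rcases i with _ | i
  · simp only [div_eq_mul_inv, mul_inv]; push_cast; ring
  · simp only [div_eq_mul_inv, mul_inv, Nat.add_sub_cancel]; push_cast; ring

theorem stmt15_general (k T : ℕ) (hk : 2 ≤ k)
    (m V : ℝ)
    (a : ℕ → ℝ) (ha0 : 0 ≤ a 0)
    (hrec : ∀ i : ℕ, 1 ≤ i → i ≤ T →
      (1 - 2 / (k : ℝ)) * a (i - 1)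
        + (1 / (2 * (k : ℝ))) * (1 + m + (1 - m) * (1 - 2 / (k : ℝ)) ^ (i - 1)) * V
        ≤ a i) :
    ∀ i : ℕ, i ≤ T →
      (((1 + m) / 4) * (1 - (1 - 2 / (k : ℝ)) ^ i)
          + ((1 - m) * (i : ℝ) / (2 * (k : ℝ))) * (1 - 2 / (k : ℝ)) ^ (i - 1)) * V
        ≤ a i := by
  have hq : 0 ≤ 1 - 2 / (k : ℝ) := by
    rw [sub_nonneg, div_le_one (by positivity)]
    exact_mod_cast hk
  refine le_of_linear_recurrence_s15 (b := fun i ↦ randomGreedyBound k m i * V)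
    (d := fun i ↦ (1 / (2 * (k : ℝ))) * (1 + m + (1 - m) * (1 - 2 / (k : ℝ)) ^ i) * V)
    hq (by simpa using ha0) (fun i _ ↦ ?_) (fun i hi ↦ ?_)
  · simp only [randomGreedyBound_succ]
    ring
  · simpa using hrec (i + 1) (by omega) hi

/-- the Random Greedy for Matroids recursion. If `a₀ ≥ 0` and
`aᵢ ≥ (1 − 2/k)·a_{i−1} + (1/(2k))·(1 + m + (1 − m)(1 − 2/k)^{i−1})·V` for `1 ≤ i ≤ T`,
then `aᵢ ≥ [((1+m)/4)(1 − (1−2/k)^i) + ((1−m)i/(2k))(1−2/k)^{i−1}]·V` for `0 ≤ i ≤ T`. -/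
theorem stmt15 (k T : ℕ) (hk : 2 ≤ k)
    (m V : ℝ) (hm : m ∈ Set.Icc (0 : ℝ) 1) (hV : 0 ≤ V)
    (a : ℕ → ℝ) (ha0 : 0 ≤ a 0)
    (hrec : ∀ i : ℕ, 1 ≤ i → i ≤ T →
      (1 - 2 / (k : ℝ)) * a (i - 1)
        + (1 / (2 * (k : ℝ))) * (1 + m + (1 - m) * (1 - 2 / (k : ℝ)) ^ (i - 1)) * V
        ≤ a i) :
    ∀ i : ℕ, i ≤ T →
      (((1 + m) / 4) * (1 - (1 - 2 / (k : ℝ)) ^ i)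
          + ((1 - m) * (i : ℝ) / (2 * (k : ℝ))) * (1 - 2 / (k : ℝ)) ^ (i - 1)) * V
        ≤ a i :=
  stmt15_general k T hk m V a ha0 hrec
end

section
/- Let 𝒩 be a finite ground set, let s: 𝒩 × 𝒩 → ℝ be non-negative and symmetric (s(u,v) = s(v,u) for all u, v), let λ ∈ ℝ, and define f: 2^𝒩 → ℝ by f(S) = Σ_{u∈𝒩} Σ_{v∈S} s(u,v) − λ·Σ_{u∈S} Σ_{v∈S} s(u,v). Then: (1) if 0 ≤ λ ≤ 1/2, f is monotone, i.e., f(S) ≤ f(T) for all S ⊆ T ⊆ 𝒩; and (2) if 1/2 ≤ λ ≤ 1, f is 2(1 − λ)-monotone, i.e., f(T) ≥ 2(1 − λ)·f(S) for all S ⊆ T ⊆ 𝒩. -/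
/-- the movie-recommendation objective
`f(S) = Σ_{u∈𝒩} Σ_{v∈S} s(u,v) − λ·Σ_{u∈S} Σ_{v∈S} s(u,v)` with non-negative symmetric
similarities is monotone for `0 ≤ λ ≤ 1/2` and `2(1 − λ)`-monotone for `1/2 ≤ λ ≤ 1`. -/
theorem stmt16 {α : Type*} [Fintype α] [DecidableEq α]
    (s : α → α → ℝ)
    (hs_nn : ∀ u v, 0 ≤ s u v)
    (hs_symm : ∀ u v, s u v = s v u)
    (lam : ℝ)
    (f : Finset α → ℝ)
    (hf : ∀ S : Finset α,
      f S = (∑ u : α, ∑ v ∈ S, s u v) - lam * ∑ u ∈ S, ∑ v ∈ S, s u v) :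
    ((0 ≤ lam ∧ lam ≤ 1 / 2) → ∀ S T : Finset α, S ⊆ T → f S ≤ f T) ∧
    ((1 / 2 ≤ lam ∧ lam ≤ 1) → ∀ S T : Finset α, S ⊆ T → 2 * (1 - lam) * f S ≤ f T) := by
  have key : ∀ S T : Finset α, S ⊆ T → ∃ AS AD BSS BSD BDD : ℝ,
      f S = AS - lam * BSS ∧ f T = (AS + AD) - lam * (BSS + 2 * BSD + BDD) ∧
      0 ≤ BSS ∧ 0 ≤ BSD ∧ 0 ≤ BDD ∧ BSD + BDD ≤ AD ∧ BSS + BSD ≤ AS := by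
    intro S T hST
    set D := T \ S with hD
    refine ⟨∑ u : α, ∑ v ∈ S, s u v, ∑ u : α, ∑ v ∈ D, s u v,
      ∑ u ∈ S, ∑ v ∈ S, s u v, ∑ u ∈ S, ∑ v ∈ D, s u v,
      ∑ u ∈ D, ∑ v ∈ D, s u v, hf S, ?_, ?_, ?_, ?_, ?_, ?_⟩
    · have hsplit : ∀ g : α → ℝ, ∑ v ∈ T, g v = ∑ v ∈ S, g v + ∑ v ∈ D, g v := by
        intro g
        rw [← Finset.sum_sdiff hST]
        ring
      have hDS : ∑ u ∈ D, ∑ v ∈ S, s u v = ∑ u ∈ S, ∑ v ∈ D, s u v := by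
        rw [Finset.sum_comm]
        exact Finset.sum_congr rfl fun u _ => Finset.sum_congr rfl fun v _ => hs_symm v u
      have e1 : ∑ u : α, ∑ v ∈ T, s u v
          = (∑ u : α, ∑ v ∈ S, s u v) + ∑ u : α, ∑ v ∈ D, s u v := by
        rw [← Finset.sum_add_distrib]
        exact Finset.sum_congr rfl fun u _ => hsplit (fun v => s u v)
      have e2 : ∑ u ∈ T, ∑ v ∈ T, s u v
          = (∑ u ∈ S, ∑ v ∈ S, s u v) + 2 * (∑ u ∈ S, ∑ v ∈ D, s u v)
            + ∑ u ∈ D, ∑ v ∈ D, s u v := by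
        rw [hsplit (fun u => ∑ v ∈ T, s u v)]
        simp only [hsplit (fun v => s _ v)]
        rw [Finset.sum_add_distrib, Finset.sum_add_distrib, hDS]
        ring
      rw [hf T, e1, e2]
    · exact Finset.sum_nonneg fun u _ => Finset.sum_nonneg fun v _ => hs_nn u v
    · exact Finset.sum_nonneg fun u _ => Finset.sum_nonneg fun v _ => hs_nn u v
    · exact Finset.sum_nonneg fun u _ => Finset.sum_nonneg fun v _ => hs_nn u v
    · -- BSD + BDD = ∑_{u ∈ T} ∑_{v ∈ D} ≤ ∑_{u : α} ∑_{v ∈ D}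
      have : ∑ u ∈ S, ∑ v ∈ D, s u v + ∑ u ∈ D, ∑ v ∈ D, s u v
          = ∑ u ∈ T, ∑ v ∈ D, s u v := by
        rw [← Finset.sum_sdiff hST]; ring
      rw [this]
      exact Finset.sum_le_sum_of_subset_of_nonneg (Finset.subset_univ T)
        (fun u _ _ => Finset.sum_nonneg fun v _ => hs_nn u v)
    · -- BSS + BSD = ∑_{u ∈ S} ∑_{v ∈ T} ≤ ∑_{u ∈ S} ∑_{v : α} = AS (by symmetry)
      have h1 : ∑ u ∈ S, ∑ v ∈ S, s u v + ∑ u ∈ S, ∑ v ∈ D, s u v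
          = ∑ u ∈ S, ∑ v ∈ T, s u v := by
        rw [← Finset.sum_add_distrib]
        refine Finset.sum_congr rfl fun u _ => ?_
        rw [← Finset.sum_sdiff hST]; ring
      have h2 : (∑ u : α, ∑ v ∈ S, s u v) = ∑ u ∈ S, ∑ v : α, s u v := by
        rw [Finset.sum_comm]
        exact Finset.sum_congr rfl fun u _ => Finset.sum_congr rfl fun v _ => hs_symm v u
      rw [h1, h2]
      refine Finset.sum_le_sum fun u _ => ?_
      exact Finset.sum_le_sum_of_subset_of_nonneg (Finset.subset_univ T)
        (fun v _ _ => hs_nn u v)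
  constructor
  · rintro ⟨hl0, hl2⟩ S T hST
    obtain ⟨AS, AD, BSS, BSD, BDD, hfS, hfT, hBSS, hBSD, hBDD, hAD, hAS⟩ := key S T hST
    rw [hfS, hfT]
    nlinarith [mul_nonneg hl0 hBSD, mul_nonneg hl0 hBDD,
      mul_le_mul_of_nonneg_right hl2 (by linarith : (0:ℝ) ≤ 2 * BSD + BDD)]
  · rintro ⟨hl2, hl1⟩ S T hST
    obtain ⟨AS, AD, BSS, BSD, BDD, hfS, hfT, hBSS, hBSD, hBDD, hAD, hAS⟩ := key S T hST
    rw [hfS, hfT]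
    nlinarith [mul_nonneg (by linarith : (0:ℝ) ≤ 2 * lam - 1) (by linarith : (0:ℝ) ≤ AS - BSS - BSD),
      mul_nonneg (mul_nonneg (by linarith : (0:ℝ) ≤ 2 * lam - 1) (by linarith : (0:ℝ) ≤ 1 - lam)) hBSS,
      mul_nonneg (by linarith : (0:ℝ) ≤ 1 - lam) (by linarith : (0:ℝ) ≤ AD - BSD - BDD),
      mul_nonneg (by linarith : (0:ℝ) ≤ 1 - lam) hBDD]
end

section
/- Let 𝒩 be a nonempty finite ground set, let s: 𝒩 × 𝒩 → ℝ be non-negative, and define f(S) = Σ_{u∈𝒩} max_{v∈S} s(u,v) − (1/|𝒩|)·Σ_{u∈S} Σ_{v∈S} s(u,v), where max over the empty set is taken to be 0. Then for every integer k with 1 ≤ k ≤ |𝒩| and every two sets S, T ⊆ 𝒩 with |S| ≤ k and |T| ≤ k, f(S ∪ T) ≥ (1 − 2k/|𝒩|)·f(S). In other words, f is (1 − 2k/|𝒩|)-weakly monotone when feasible sets have size at most k. -/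
/-- the image-summarization objective
`f(S) = Σ_{u∈𝒩} max_{v∈S} s(u,v) − (1/|𝒩|)·Σ_{u∈S} Σ_{v∈S} s(u,v)` (with the max over the
empty set taken to be `0`) satisfies `f(S ∪ T) ≥ (1 − 2k/|𝒩|)·f(S)` for every two sets of
cardinality at most `k`, i.e., it is `(1 − 2k/|𝒩|)`-weakly monotone. -/
theorem stmt17 {α : Type*} [Fintype α] [DecidableEq α] [Nonempty α]
    (s : α → α → ℝ)
    (hs_nn : ∀ u v, 0 ≤ s u v)
    (f : Finset α → ℝ)
    (hf : ∀ S : Finset α,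
      f S = (∑ u : α, if h : S.Nonempty then S.sup' h (fun v => s u v) else 0)
        - (1 / (Fintype.card α : ℝ)) * ∑ u ∈ S, ∑ v ∈ S, s u v)
    (k : ℕ) (hk1 : 1 ≤ k) (hk2 : k ≤ Fintype.card α)
    (S T : Finset α) (hS : S.card ≤ k) (hT : T.card ≤ k) :
    (1 - 2 * (k : ℝ) / (Fintype.card α : ℝ)) * f S ≤ f (S ∪ T) := by
  set n : ℝ := (Fintype.card α : ℝ) with hn
  have hn1 : (1 : ℝ) ≤ n := by
    have h : 1 ≤ Fintype.card α := Fintype.card_pos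
    rw [hn]; exact_mod_cast h
  have hn0 : (0 : ℝ) < n := by linarith
  set A : Finset α → ℝ :=
    fun U => ∑ u : α, if h : U.Nonempty then U.sup' h (fun v => s u v) else 0 with hA
  set B : Finset α → ℝ := fun U => ∑ u ∈ U, ∑ v ∈ U, s u v with hB
  have hfAB : ∀ U, f U = A U - (1 / n) * B U := fun U => hf U
  -- each summand of A is nonnegative
  have hterm_nn : ∀ (u : α) (U : Finset α),
      0 ≤ (if h : U.Nonempty then U.sup' h (fun v => s u v) else 0) := by
    intro u U
    by_cases h : U.Nonempty
    · simp only [dif_pos h]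
      obtain ⟨v, hv⟩ := h
      exact le_trans (hs_nn u v) (Finset.le_sup' _ hv)
    · simp [h]
  have hAnn : ∀ U, 0 ≤ A U := fun U => Finset.sum_nonneg fun u _ => hterm_nn u U
  have hAmono : ∀ U V : Finset α, U ⊆ V → A U ≤ A V := by
    intro U V hUV
    apply Finset.sum_le_sum
    intro u _
    by_cases h : U.Nonempty
    · have hV : V.Nonempty := h.mono hUV
      simp only [dif_pos h, dif_pos hV]
      exact Finset.sup'_mono _ hUV h
    · simp only [dif_neg h]
      exact hterm_nn u V
  have hBnn : ∀ U, 0 ≤ B U :=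
    fun U => Finset.sum_nonneg fun u _ => Finset.sum_nonneg fun v _ => hs_nn u v
  -- B U ≤ |U| * A U
  have hBle : ∀ U : Finset α, B U ≤ (U.card : ℝ) * A U := by
    intro U
    by_cases h : U.Nonempty
    · have h1 : B U ≤ ∑ u ∈ U, (U.card : ℝ) * U.sup' h (fun v => s u v) := by
        apply Finset.sum_le_sum
        intro u _
        have : ∑ v ∈ U, s u v ≤ (U.card : ℝ) * U.sup' h (fun v => s u v) := by
          calc ∑ v ∈ U, s u v ≤ ∑ _v ∈ U, U.sup' h (fun v => s u v) :=
                Finset.sum_le_sum fun v hv => Finset.le_sup' _ hv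
            _ = (U.card : ℝ) * U.sup' h (fun v => s u v) := by
                rw [Finset.sum_const, nsmul_eq_mul]
        exact this
      have h2 : ∑ u ∈ U, (U.card : ℝ) * U.sup' h (fun v => s u v)
          = (U.card : ℝ) * ∑ u ∈ U, U.sup' h (fun v => s u v) := by
        rw [Finset.mul_sum]
      have h3 : ∑ u ∈ U, U.sup' h (fun v => s u v) ≤ A U := by
        have : ∑ u ∈ U, U.sup' h (fun v => s u v)
            = ∑ u ∈ U, if h' : U.Nonempty then U.sup' h' (fun v => s u v) else 0 := by
          apply Finset.sum_congr rfl
          intro u _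
          simp [h]
        rw [this]
        apply Finset.sum_le_sum_of_subset_of_nonneg (Finset.subset_univ U)
        intro u _ _
        exact hterm_nn u U
      have h4 : (0 : ℝ) ≤ (U.card : ℝ) := by positivity
      calc B U ≤ (U.card : ℝ) * ∑ u ∈ U, U.sup' h (fun v => s u v) := by
            rw [← h2]; exact h1
        _ ≤ (U.card : ℝ) * A U := by
            exact mul_le_mul_of_nonneg_left h3 h4
    · rw [Finset.not_nonempty_iff_eq_empty] at h
      subst h
      simp [hB]
  have hcard_le_n : ∀ U : Finset α, (U.card : ℝ) ≤ n := by
    intro U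
    have := Finset.card_le_univ U
    rw [hn]
    exact_mod_cast this
  -- f U ≥ (1 - |U|/n) * A U
  have hfge : ∀ U : Finset α, (1 - (U.card : ℝ) / n) * A U ≤ f U := by
    intro U
    rw [hfAB]
    have h1 : (1 / n) * B U ≤ (1 / n) * ((U.card : ℝ) * A U) :=
      mul_le_mul_of_nonneg_left (hBle U) (by positivity)
    have h2 : (1 - (U.card : ℝ) / n) * A U = A U - (1 / n) * ((U.card : ℝ) * A U) := by
      field_simp
    linarith
  have hfnn : ∀ U : Finset α, 0 ≤ f U := by
    intro U
    have h1 := hfge U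
    have h2 := hcard_le_n U
    have h3 := hAnn U
    have h4 : 0 ≤ 1 - (U.card : ℝ) / n := by
      rw [sub_nonneg, div_le_one hn0]
      exact h2
    nlinarith
  rcases le_or_gt (1 - 2 * (k : ℝ) / n) 0 with hm | hm
  · have h1 := hfnn S
    have h2 := hfnn (S ∪ T)
    nlinarith
  · -- m > 0 case
    have hcU : ((S ∪ T).card : ℝ) ≤ 2 * (k : ℝ) := by
      have := Finset.card_union_le S T
      have : (S ∪ T).card ≤ 2 * k := le_trans this (by omega)
      calc ((S ∪ T).card : ℝ) ≤ ((2 * k : ℕ) : ℝ) := by exact_mod_cast this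
        _ = 2 * (k : ℝ) := by push_cast; ring
    have h1 : (1 - ((S ∪ T).card : ℝ) / n) * A (S ∪ T) ≤ f (S ∪ T) := hfge _
    have h2 : (1 - 2 * (k : ℝ) / n) * A (S ∪ T) ≤ (1 - ((S ∪ T).card : ℝ) / n) * A (S ∪ T) := by
      apply mul_le_mul_of_nonneg_right _ (hAnn _)
      have hc : ((S ∪ T).card : ℝ) / n ≤ 2 * (k : ℝ) / n := by gcongr
      linarith
    have h3 : A S ≤ A (S ∪ T) := hAmono _ _ Finset.subset_union_left
    have h4 : f S ≤ A S := by
      rw [hfAB]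
      have : 0 ≤ (1 / n) * B S := mul_nonneg (by positivity) (hBnn S)
      linarith
    have h5 : (1 - 2 * (k : ℝ) / n) * f S ≤ (1 - 2 * (k : ℝ) / n) * A S :=
      mul_le_mul_of_nonneg_left h4 hm.le
    have h6 : (1 - 2 * (k : ℝ) / n) * A S ≤ (1 - 2 * (k : ℝ) / n) * A (S ∪ T) :=
      mul_le_mul_of_nonneg_left h3 hm.le
    linarith
end

section
/- Let n ≥ 1, let H ∈ ℝ^{n×n} have all entries non-positive, let u ∈ ℝⁿ have all entries non-negative, let β ∈ (0, 1/2), and set h = −β·Hᵀu (which has non-negative entries). Let M ∈ ℝ be the minimum of q(x) = (1/2)xᵀHx + hᵀx over the box {x ∈ ℝⁿ : 0 ≤ x ≤ u} (i.e., q(x) ≥ M for all x in the box and M is attained by some x in the box), let α > 0, let c = −M + α|M|, and define F(x) = (1/2)xᵀHx + hᵀx + c. Then for every two vectors x, y with 0 ≤ x ≤ y ≤ u (coordinate-wise), F(y) ≥ ((1 − 2β)·α/(1 + α))·F(x); furthermore, if M ≥ 0, then F(y) ≥ (1 − 2β)·F(x). -/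
open Matrix

/-- monotonicity ratio of the quadratic-programming objective
`F(x) = (1/2)xᵀHx + hᵀx + c` with `H ≤ 0`, `h = −β·Hᵀu`, `β ∈ (0, 1/2)`,
`c = −M + α|M|` where `M` is the minimum of `(1/2)xᵀHx + hᵀx` over the box `[0, u]`.
For every `0 ≤ x ≤ y ≤ u`, `F(y) ≥ ((1 − 2β)α/(1 + α))·F(x)`, and if moreover `M ≥ 0`
then `F(y) ≥ (1 − 2β)·F(x)`. -/
theorem stmt18 (n : ℕ) (hn : 1 ≤ n)
    (H : Matrix (Fin n) (Fin n) ℝ) (hH : ∀ i j, H i j ≤ 0)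
    (u : Fin n → ℝ) (hu : ∀ i, 0 ≤ u i)
    (β : ℝ) (hβ : β ∈ Set.Ioo (0 : ℝ) (1 / 2))
    (h : Fin n → ℝ) (hh : h = fun i => -β * (Hᵀ.mulVec u) i)
    (M : ℝ)
    (hMlb : ∀ x : Fin n → ℝ, (∀ i, 0 ≤ x i) → (∀ i, x i ≤ u i) →
      M ≤ (1 / 2) * (x ⬝ᵥ H.mulVec x) + h ⬝ᵥ x)
    (hMatt : ∃ x : Fin n → ℝ, (∀ i, 0 ≤ x i) ∧ (∀ i, x i ≤ u i) ∧
      (1 / 2) * (x ⬝ᵥ H.mulVec x) + h ⬝ᵥ x = M)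
    (α : ℝ) (hα : 0 < α)
    (c : ℝ) (hc : c = -M + α * |M|)
    (F : (Fin n → ℝ) → ℝ)
    (hF : ∀ x : Fin n → ℝ, F x = (1 / 2) * (x ⬝ᵥ H.mulVec x) + h ⬝ᵥ x + c)
    (x y : Fin n → ℝ)
    (hx0 : ∀ i, 0 ≤ x i) (hxy : ∀ i, x i ≤ y i) (hyu : ∀ i, y i ≤ u i) :
    ((1 - 2 * β) * α / (1 + α)) * F x ≤ F y ∧
    (0 ≤ M → (1 - 2 * β) * F x ≤ F y) := by
  obtain ⟨hβ0, hβh⟩ := hβ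
  -- h ⬝ᵥ v = -β * (u ⬝ᵥ H *ᵥ v)
  have hdv : ∀ v : Fin n → ℝ, h ⬝ᵥ v = -β * (u ⬝ᵥ H.mulVec v) := by
    intro v
    subst hh
    simp only [dotProduct, mulVec, transpose_apply, Finset.mul_sum, Finset.sum_mul]
    rw [Finset.sum_comm]
    apply Finset.sum_congr rfl; intro i _
    apply Finset.sum_congr rfl; intro j _
    ring
  -- double products are nonpositive
  have hnonpos : ∀ v w : Fin n → ℝ, (∀ i, 0 ≤ v i) → (∀ i, 0 ≤ w i) →
      v ⬝ᵥ H.mulVec w ≤ 0 := by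
    intro v w hv hw
    simp only [dotProduct, mulVec]
    apply Finset.sum_nonpos; intro i _
    apply mul_nonpos_of_nonneg_of_nonpos (hv i)
    apply Finset.sum_nonpos; intro j _
    exact mul_nonpos_of_nonpos_of_nonneg (hH i j) (hw j)
  -- monotone in the right argument (reversed)
  have hmono : ∀ v w w' : Fin n → ℝ, (∀ i, 0 ≤ v i) → (∀ i, w i ≤ w' i) →
      v ⬝ᵥ H.mulVec w' ≤ v ⬝ᵥ H.mulVec w := by
    intro v w w' hv hww
    simp only [dotProduct, mulVec]
    apply Finset.sum_le_sum; intro i _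
    apply mul_le_mul_of_nonneg_left _ (hv i)
    apply Finset.sum_le_sum; intro j _
    exact mul_le_mul_of_nonpos_left (hww j) (hH i j)
  have hxu : ∀ i, x i ≤ u i := fun i => le_trans (hxy i) (hyu i)
  have hy0 : ∀ i, 0 ≤ y i := fun i => le_trans (hx0 i) (hxy i)
  -- abbreviations
  set S : ℝ := u ⬝ᵥ H.mulVec u with hS
  set P : ℝ := u ⬝ᵥ H.mulVec x with hP
  have hSP : S ≤ P := hmono u x u hu hxu
  have hS0 : S ≤ 0 := hnonpos u u hu hu
  have hxx : x ⬝ᵥ H.mulVec x ≤ 0 := hnonpos x x hx0 hx0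
  -- M ≤ 0 (from the zero vector)
  have hM0 : M ≤ 0 := by
    have := hMlb (fun _ => 0) (fun _ => le_refl 0) (fun i => hu i)
    simpa [dotProduct] using this
  -- M ≤ (1/2 - β) * S (from the vector u)
  have hMu : M ≤ (1 / 2 - β) * S := by
    have := hMlb u hu (fun i => le_refl (u i))
    rw [hdv u] at this
    linarith
  -- F y ≥ M + c
  have hMy : M ≤ (1 / 2) * (y ⬝ᵥ H.mulVec y) + h ⬝ᵥ y := hMlb y hy0 hyu
  -- upper bound on the quadratic part at x
  have hgx : (1 / 2) * (x ⬝ᵥ H.mulVec x) + h ⬝ᵥ x ≤ -β * S := by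
    rw [hdv x]
    nlinarith [hSP, hβ0.le]
  have hcc : c = (1 + α) * (-M) := by
    rw [hc, abs_of_nonpos hM0]; ring
  have hFy : α * (-M) ≤ F y := by
    rw [hF y, hcc]; linarith
  have hFx : F x ≤ -β * S + (1 + α) * (-M) := by
    rw [hF x, hcc]; linarith
  have hMnn : 0 ≤ -M := by linarith
  constructor
  · rw [div_mul_eq_mul_div, div_le_iff₀ (by linarith : (0:ℝ) < 1 + α)]
    have step1 : (1 - 2 * β) * α * F x ≤ (1 - 2 * β) * α * (-β * S + (1 + α) * (-M)) :=
      mul_le_mul_of_nonneg_left hFx (by nlinarith)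
    have step2 : (1 - 2 * β) * α * (-β * S + (1 + α) * (-M)) ≤ α * (-M) * (1 + α) := by
      nlinarith [mul_nonneg (mul_nonneg hα.le hβ0.le) (by linarith : (0:ℝ) ≤ (1 - 2 * β) * S - 2 * M),
        mul_nonneg (mul_nonneg (mul_nonneg hα.le hα.le) hβ0.le) hMnn,
        mul_nonneg (mul_nonneg hα.le hβ0.le) hMnn]
    have step3 : α * (-M) * (1 + α) ≤ F y * (1 + α) :=
      mul_le_mul_of_nonneg_right hFy (by linarith)
    linarith
  · intro hMge
    have hMeq : M = 0 := le_antisymm hM0 hMge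
    have hSnn : 0 ≤ S := by nlinarith [hMu]
    have hSe : S = 0 := le_antisymm hS0 hSnn
    have hFx0 : F x ≤ 0 := by
      have hgx' := hgx
      rw [hSe] at hgx'
      rw [hF x, hcc, hMeq]
      linarith
    have hFy0 : 0 ≤ F y := by rw [hF y, hcc, hMeq]; linarith
    nlinarith [hFx0, hFy0]
end

section
/- Let n ≥ 1 and let F: [0,1]ⁿ → ℝ be a continuously differentiable function that is non-negative, m-monotone (m·F(x) ≤ F(y) whenever 0 ≤ x ≤ y ≤ 1 coordinate-wise), DR-submodular (∇F(x) ≥ ∇F(y) coordinate-wise whenever x ≤ y), and L-smooth (‖∇F(x) − ∇F(y)‖₂ ≤ L‖x − y‖₂ for all x, y ∈ [0,1]ⁿ). Let P ⊆ [0,1]ⁿ be a nonempty convex down-closed set, let D ≥ 0 satisfy ‖x‖₂ ≤ D for all x ∈ P, and let ε = 1/K for an integer K ≥ 1. Consider the Non-monotone Frank-Wolfe iterates y⁽⁰⁾ = 0 and, for i = 0, 1, …, K − 1, y⁽ⁱ⁺¹⁾ = y⁽ⁱ⁾ + ε·(1 − y⁽ⁱ⁾) ⊙ s⁽ⁱ⁾,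 where s⁽ⁱ⁾ ∈ P maximizes x ↦ x · ((1 − y⁽ⁱ⁾) ⊙ ∇F(y⁽ⁱ⁾)) over P. Then for every o ∈ P, F(y⁽ᴷ⁾) ≥ [m·(1 − 1/e) + (1 − m)·(1/e)]·F(o) − ε·L·D². -/
/-!
DR-submodularity makes `F` concave along every non-negative direction. This gives the first-order
bound `F (x + v) - F x ≤ ∇F(x) ⬝ v` for `v ≥ 0`, and, by concavity on the ray from `o` through
`y + (1 - y) ⊙ o` up to the point `o + (1 - o) ⊙ y / a` (still in the box when `y ≤ a`, and worth at
least `m F(o)` by `m`-monotonicity), the bound `F (y + (1 - y) ⊙ o) ≥ (1 - (1 - m) a) F(o)`.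
Since `1 - yⁱ ≥ (1 - ε)ⁱ`, these together with the choice of `sⁱ` and `L`-smoothness give
`F(yⁱ⁺¹) ≥ (1 - ε) F(yⁱ) + ε (m + (1 - m) (1 - ε)ⁱ) F(o) - ε²LD²`. Unrolling this recursion and
using `(1 - 1/K)ᴷ ≤ 1/e ≤ (1 - 1/K)ᴷ⁻¹` yields the bound.
-/

open Set

section DRSubmodular

lemma mem_Icc_zero_one_iff {ι : Type*} {x : ι → ℝ} :
    x ∈ Icc 0 1 ↔ ∀ i, 0 ≤ x i ∧ x i ≤ 1 := by
  simp only [mem_Icc, Pi.le_def, Pi.zero_apply, Pi.one_apply, forall_and]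

variable {ι : Type*} [Fintype ι] {F : (ι → ℝ) → ℝ} {gF : (ι → ℝ) → ι → ℝ}

def HasGradientOn (F : (ι → ℝ) → ℝ) (gF : (ι → ℝ) → ι → ℝ) (s : Set (ι → ℝ)) : Prop :=
  ∀ x ∈ s, HasFDerivAt F
    (LinearMap.toContinuousLinearMap (∑ i, gF x i • (LinearMap.proj i : (ι → ℝ) →ₗ[ℝ] ℝ))) x

lemma HasGradientOn.hasDerivAt_add_smul {s : Set (ι → ℝ)} (hF : HasGradientOn F gF s)
    {x v : ι → ℝ} {t : ℝ} (hxt : x + t • v ∈ s) :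
    HasDerivAt (fun t : ℝ => F (x + t • v)) (gF (x + t • v) ⬝ᵥ v) t := by
  have hline : HasDerivAt (fun t : ℝ => x + t • v) v t := by
    simpa using ((hasDerivAt_id t).smul_const v).const_add x
  refine ((hF _ hxt).comp_hasDerivAt t hline).congr_deriv ?_
  simp [dotProduct, mul_comm]

lemma concaveOn_comp_add_smul (hF : HasGradientOn F gF (Icc 0 1))
    (hDR : AntitoneOn gF (Icc 0 1)) {x v : ι → ℝ} (hv : 0 ≤ v) {S : Set ℝ} (hS : Convex ℝ S)
    (hSbox : ∀ t ∈ S, x + t • v ∈ Icc 0 1) :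
    ConcaveOn ℝ S (fun t => F (x + t • v)) := by
  have hderiv (t) (ht : t ∈ S) := hF.hasDerivAt_add_smul (hSbox t ht)
  refine AntitoneOn.concaveOn_of_deriv hS
    (fun t ht => (hderiv t ht).continuousAt.continuousWithinAt)
    (fun t ht => (hderiv t (interior_subset ht)).differentiableAt.differentiableWithinAt) ?_
  intro s hs t ht hst
  rw [(hderiv s (interior_subset hs)).deriv, (hderiv t (interior_subset ht)).deriv]
  refine dotProduct_le_dotProduct_of_nonneg_right
    (hDR (hSbox s (interior_subset hs)) (hSbox t (interior_subset ht)) ?_) hv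
  exact add_le_add_right (smul_le_smul_of_nonneg_right hst hv) x

lemma apply_add_sub_apply_le_dotProduct (hF : HasGradientOn F gF (Icc 0 1))
    (hDR : AntitoneOn gF (Icc 0 1)) {x v : ι → ℝ} (hv : 0 ≤ v) (hx : x ∈ Icc 0 1)
    (hxv : x + v ∈ Icc 0 1) :
    F (x + v) - F x ≤ gF x ⬝ᵥ v := by
  have hseg : ∀ t ∈ Icc (0 : ℝ) 1, x + t • v ∈ Icc 0 1 :=
    fun t ht => (convex_Icc 0 1).add_smul_mem hx hxv ht
  have hslope := (concaveOn_comp_add_smul hF hDR hv (convex_Icc 0 1) hseg).slope_le_of_hasDerivAt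
    (left_mem_Icc.2 zero_le_one) (right_mem_Icc.2 zero_le_one) one_pos
    (hF.hasDerivAt_add_smul (t := 0) (by simpa using hx))
  simpa [slope_def_field] using hslope

lemma apply_add_dotProduct_sub_le (hF : HasGradientOn F gF (Icc 0 1)) {L : ℝ} (hL : 0 ≤ L)
    (hsmooth : ∀ x ∈ Icc (0 : ι → ℝ) 1, ∀ y ∈ Icc (0 : ι → ℝ) 1,
      √(∑ i, (gF x i - gF y i) ^ 2) ≤ L * √(∑ i, (x i - y i) ^ 2))
    {x d : ι → ℝ} (hx : x ∈ Icc 0 1) (hxd : x + d ∈ Icc 0 1) :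
    F x + gF x ⬝ᵥ d - L * ∑ i, d i ^ 2 ≤ F (x + d) := by
  have hseg : ∀ t ∈ Icc (0 : ℝ) 1, x + t • d ∈ Icc 0 1 :=
    fun t ht => (convex_Icc 0 1).add_smul_mem hx hxd ht
  obtain ⟨ξ, ⟨hξ0, hξ1⟩, hmvt⟩ := exists_hasDerivAt_eq_slope (fun t : ℝ => F (x + t • d))
    (fun t => gF (x + t • d) ⬝ᵥ d) zero_lt_one
    (fun t ht => (hF.hasDerivAt_add_smul (hseg t ht)).continuousAt.continuousWithinAt)
    (fun t ht => hF.hasDerivAt_add_smul (hseg t (Ioo_subset_Icc_self ht)))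
  set z := x + ξ • d
  have hz : z ∈ Icc 0 1 := hseg ξ ⟨hξ0.le, hξ1.le⟩
  have hdist : √(∑ i, (x i - z i) ^ 2) = ξ * √(∑ i, d i ^ 2) := by
    have hsum : ∑ i, (x i - z i) ^ 2 = ξ ^ 2 * ∑ i, d i ^ 2 := by
      simp only [z, Finset.mul_sum, Pi.add_apply, Pi.smul_apply, smul_eq_mul]
      exact Finset.sum_congr rfl fun i _ => by ring
    rw [hsum, Real.sqrt_mul (sq_nonneg ξ), Real.sqrt_sq hξ0.le]
  have hgrad : (gF x - gF z) ⬝ᵥ d ≤ L * ∑ i, d i ^ 2 :=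
    calc (gF x - gF z) ⬝ᵥ d
        ≤ √(∑ i, (gF x i - gF z i) ^ 2) * √(∑ i, d i ^ 2) :=
          Real.sum_mul_le_sqrt_mul_sqrt _ _ _
      _ ≤ L * (ξ * √(∑ i, d i ^ 2)) * √(∑ i, d i ^ 2) := by
          rw [← hdist]; gcongr; exact hsmooth x hx z hz
      _ = L * ξ * ∑ i, d i ^ 2 := by
          rw [mul_assoc, mul_assoc, Real.mul_self_sqrt (by positivity), mul_assoc]
      _ ≤ L * ∑ i, d i ^ 2 := by gcongr; exact mul_le_of_le_one_right hL hξ1.le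
  simp only [zero_smul, add_zero, one_smul, sub_zero, div_one] at hmvt
  rw [sub_dotProduct] at hgrad
  linarith

lemma one_sub_mul_le_apply_add_one_sub_mul (hF : HasGradientOn F gF (Icc 0 1))
    (hDR : AntitoneOn gF (Icc 0 1)) {m : ℝ}
    (hmono : ∀ x y : ι → ℝ, 0 ≤ x → x ≤ y → y ≤ 1 → m * F x ≤ F y)
    {o y : ι → ℝ} {a : ℝ} (ho : o ∈ Icc 0 1) (hy : 0 ≤ y) (hya : ∀ i, y i ≤ a)
    (ha0 : 0 ≤ a) (ha1 : a ≤ 1) :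
    (1 - (1 - m) * a) * F o ≤ F (y + (1 - y) * o) := by
  rcases ha0.eq_or_lt with rfl | ha
  · obtain rfl : y = 0 := le_antisymm hya hy
    simp
  set u := (1 - o) * y
  have hu : 0 ≤ u := mul_nonneg (sub_nonneg.2 ho.2) hy
  have hray : ∀ t ∈ Icc 0 a⁻¹, o + t • u ∈ Icc 0 1 := by
    rintro t ⟨ht0, hta⟩
    refine ⟨add_nonneg ho.1 (smul_nonneg ht0 hu), fun i => ?_⟩
    have hty : t * y i ≤ 1 :=
      calc t * y i ≤ a⁻¹ * a := mul_le_mul hta (hya i) (hy i) (inv_nonneg.2 ha0)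
        _ = 1 := inv_mul_cancel₀ ha.ne'
    have hoi := ho.2 i
    simp only [u, Pi.add_apply, Pi.smul_apply, Pi.mul_apply, Pi.sub_apply, Pi.one_apply,
      smul_eq_mul] at hoi ⊢
    nlinarith
  have hfar : m * F o ≤ F (o + a⁻¹ • u) :=
    hmono _ _ ho.1 (le_add_of_nonneg_right (smul_nonneg (inv_nonneg.2 ha0) hu))
      (hray _ (right_mem_Icc.2 (inv_nonneg.2 ha0))).2
  -- `o + u = y + (1 - y) * o` splits the segment from `o` to `o + a⁻¹ • u` in the ratio `a : 1 - a`
  have hconc := (concaveOn_comp_add_smul hF hDR hu (convex_Icc 0 a⁻¹) hray).2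
    (left_mem_Icc.2 (inv_nonneg.2 ha0)) (right_mem_Icc.2 (inv_nonneg.2 ha0))
    (sub_nonneg.2 ha1) ha0 (sub_add_cancel 1 a)
  have hw : o + ((1 - a) • (0 : ℝ) + a • a⁻¹) • u = y + (1 - y) * o := by
    rw [smul_zero, zero_add, smul_eq_mul, mul_inv_cancel₀ ha.ne', one_smul]
    ext i; simp only [u, Pi.add_apply, Pi.mul_apply, Pi.sub_apply, Pi.one_apply]; ring
  beta_reduce at hconc
  rw [hw, zero_smul, add_zero, smul_eq_mul, smul_eq_mul] at hconc
  linarith [mul_le_mul_of_nonneg_left hfar ha0]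

end DRSubmodular

section FrankWolfe

variable {ι : Type*}

lemma add_one_sub_mul_mem_Icc {x s : ι → ℝ} (hx : x ∈ Icc 0 1) (hs : s ∈ Icc 0 1) :
    x + (1 - x) * s ∈ Icc 0 1 := by
  refine ⟨add_nonneg hx.1 (mul_nonneg (sub_nonneg.2 hx.2) hs.1), fun j => ?_⟩
  have h1 : 0 ≤ 1 - x j := sub_nonneg.2 (hx.2 j)
  calc x j + (1 - x j) * s j ≤ x j + (1 - x j) * 1 := by gcongr; exact hs.2 j
    _ = 1 := by ring

lemma frankWolfe_iterate_bounds {ε : ℝ} (hε0 : 0 ≤ ε) (hε1 : ε ≤ 1) {K : ℕ}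
    {y s : ℕ → ι → ℝ} (hy0 : y 0 = 0) (hs : ∀ i < K, s i ∈ Icc 0 1)
    (hy : ∀ i < K, y (i + 1) = y i + ε • ((1 - y i) * s i)) :
    ∀ i ≤ K, 0 ≤ y i ∧ ∀ j, (1 - ε) ^ i ≤ 1 - y i j := by
  intro i
  induction i with
  | zero => intro _; simp [hy0]
  | succ i ih =>
    intro hi
    obtain ⟨hyi, hyq⟩ := ih (by omega)
    obtain ⟨hs0, hs1⟩ := hs i (by omega)
    rw [hy i (by omega)]
    have hq : 0 ≤ (1 - ε) ^ i := pow_nonneg (sub_nonneg.2 hε1) i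
    refine ⟨fun j => ?_, fun j => ?_⟩
    · exact add_nonneg (hyi j) (smul_nonneg hε0 (mul_nonneg (hq.trans (hyq j)) (hs0 j)))
    · -- the complement `1 - y` is multiplied by `1 - ε s ≥ 1 - ε` at each step
      have h1 : 1 - (y i + ε • ((1 - y i) * s i)) j = (1 - y i j) * (1 - ε * s i j) := by
        simp only [Pi.add_apply, Pi.smul_apply, Pi.mul_apply, Pi.sub_apply, Pi.one_apply,
          smul_eq_mul]; ring
      rw [h1, pow_succ]
      exact mul_le_mul (hyq j) (sub_le_sub_left (mul_le_of_le_one_right hε0 (hs1 j)) 1)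
        (sub_nonneg.2 hε1) (hq.trans (hyq j))

variable [Fintype ι] {F : (ι → ℝ) → ℝ} {gF : (ι → ℝ) → ι → ℝ}

lemma frankWolfe_step (hF : HasGradientOn F gF (Icc 0 1)) (hDR : AntitoneOn gF (Icc 0 1))
    {m : ℝ} (hmono : ∀ x y : ι → ℝ, 0 ≤ x → x ≤ y → y ≤ 1 → m * F x ≤ F y)
    {L : ℝ} (hL : 0 ≤ L)
    (hsmooth : ∀ x ∈ Icc (0 : ι → ℝ) 1, ∀ y ∈ Icc (0 : ι → ℝ) 1,
      √(∑ i, (gF x i - gF y i) ^ 2) ≤ L * √(∑ i, (x i - y i) ^ 2))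
    {ε q D : ℝ} (hε0 : 0 ≤ ε) (hε1 : ε ≤ 1) (hq0 : 0 ≤ q) (hq1 : q ≤ 1)
    {x s o : ι → ℝ} (hx : 0 ≤ x) (hxq : ∀ j, q ≤ 1 - x j) (hs : s ∈ Icc 0 1)
    (ho : o ∈ Icc 0 1) (hsD : √(∑ j, s j ^ 2) ≤ D)
    (hopt : o ⬝ᵥ ((1 - x) * gF x) ≤ s ⬝ᵥ ((1 - x) * gF x)) :
    (1 - ε) * F x + ε * ((m + (1 - m) * q) * F o) - ε ^ 2 * L * D ^ 2
      ≤ F (x + ε • ((1 - x) * s)) := by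
  have hx1 : 0 ≤ 1 - x := fun j => hq0.trans (hxq j)
  have hxbox : x ∈ Icc 0 1 := ⟨hx, sub_nonneg.1 hx1⟩
  set d := ε • ((1 - x) * s)
  have hxd : x + d ∈ Icc 0 1 := by
    have hεs : ε • s ∈ Icc 0 1 :=
      ⟨smul_nonneg hε0 hs.1, fun j => mul_le_one₀ hε1 (hs.1 j) (hs.2 j)⟩
    simpa only [d, mul_smul_comm] using add_one_sub_mul_mem_Icc hxbox hεs
  have hd : ∑ j, d j ^ 2 ≤ ε ^ 2 * D ^ 2 := by
    have hsD' : ∑ j, s j ^ 2 ≤ D ^ 2 := Real.sqrt_le_iff.1 hsD |>.2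
    calc ∑ j, d j ^ 2 = ε ^ 2 * ∑ j, ((1 - x j) * s j) ^ 2 := by
          simp only [d, Finset.mul_sum, Pi.smul_apply, Pi.mul_apply, Pi.sub_apply,
            Pi.one_apply, smul_eq_mul]
          exact Finset.sum_congr rfl fun j _ => by ring
      _ ≤ ε ^ 2 * ∑ j, s j ^ 2 := by
          gcongr with j
          · exact mul_nonneg (hx1 j) (hs.1 j)
          · exact mul_le_of_le_one_left (hs.1 j) (sub_le_self 1 (hx j))
      _ ≤ ε ^ 2 * D ^ 2 := by gcongr
  have hdescent := apply_add_dotProduct_sub_le hF hL hsmooth hxbox hxd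
  have hgd : gF x ⬝ᵥ d = ε * (s ⬝ᵥ ((1 - x) * gF x)) := by
    simp only [d, dotProduct, Finset.mul_sum, Pi.smul_apply, Pi.mul_apply, smul_eq_mul]
    exact Finset.sum_congr rfl fun j _ => by ring
  have hgo : gF x ⬝ᵥ ((1 - x) * o) = o ⬝ᵥ ((1 - x) * gF x) := by
    simp only [dotProduct, Pi.mul_apply]
    exact Finset.sum_congr rfl fun j _ => by ring
  have hfirst := apply_add_sub_apply_le_dotProduct hF hDR (mul_nonneg hx1 ho.1) hxbox
    (add_one_sub_mul_mem_Icc hxbox ho)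
  have hkey := one_sub_mul_le_apply_add_one_sub_mul hF hDR hmono ho hx
    (a := 1 - q) (fun j => by linarith [hxq j]) (sub_nonneg.2 hq1) (by linarith)
  rw [hgd] at hdescent
  rw [hgo] at hfirst
  linarith [mul_le_mul_of_nonneg_left hopt hε0, mul_le_mul_of_nonneg_left hfirst hε0,
    mul_le_mul_of_nonneg_left hkey hε0, mul_le_mul_of_nonneg_left hd hL]

end FrankWolfe

lemma le_of_frankWolfe_recursion {f : ℕ → ℝ} {ε m A δ : ℝ} {K : ℕ} (hε0 : 0 ≤ ε) (hε1 : ε ≤ 1)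
    (hδ : 0 ≤ δ) (hf0 : 0 ≤ f 0)
    (hrec : ∀ i < K, (1 - ε) * f i + ε * ((m + (1 - m) * (1 - ε) ^ i) * A) - δ ≤ f (i + 1)) :
    ∀ i ≤ K, (m * (1 - (1 - ε) ^ i) + (1 - m) * (i * ε * (1 - ε) ^ (i - 1))) * A - i * δ
      ≤ f i := by
  intro i
  induction i with
  | zero => intro _; simpa using hf0
  | succ i ih =>
    intro hi
    have hpow : (1 - ε) * (i * (1 - ε) ^ (i - 1)) = i * (1 - ε) ^ i := by
      rcases i with _ | i
      · simp
      · rw [Nat.add_sub_cancel, pow_succ]; ring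
    have hprev := mul_le_mul_of_nonneg_left (ih (by omega)) (sub_nonneg.2 hε1)
    have hδi : 0 ≤ ε * (i * δ) := mul_nonneg hε0 (mul_nonneg i.cast_nonneg hδ)
    rw [Nat.add_sub_cancel]
    push_cast
    linear_combination hprev + hrec i (by omega) + hδi - (1 - m) * ε * A * hpow

section Numerics

open Real

lemma exp_neg_one_le_one_sub_inv_pow (N : ℕ) : 1 / exp 1 ≤ (1 - 1 / (N + 1 : ℝ)) ^ N := by
  have hprod : (1 - 1 / (N + 1 : ℝ)) ^ N * (1 + (N : ℝ)⁻¹) ^ N = 1 := by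
    rcases N.eq_zero_or_pos with rfl | hN
    · simp
    · have hbase : (1 - 1 / (N + 1 : ℝ)) * (1 + (N : ℝ)⁻¹) = 1 := by
        field_simp
        ring
      rw [← mul_pow, hbase, one_pow]
  rw [eq_one_div_of_mul_eq_one_left hprod]
  exact one_div_le_one_div_of_le (by positivity) one_add_inv_pow_le_exp

lemma one_sub_inv_pow_le_exp_neg_one (N : ℕ) : (1 - 1 / (N + 1 : ℝ)) ^ (N + 1) ≤ 1 / exp 1 := by
  have h := one_sub_div_pow_le_exp_neg (n := N + 1) (t := 1) (by simp)
  rwa [exp_neg, ← one_div, Nat.cast_succ] at h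

lemma frankWolfe_coeff_le (N : ℕ) {m : ℝ} (hm : m ∈ Icc 0 1) :
    m * (1 - 1 / exp 1) + (1 - m) * (1 / exp 1)
      ≤ m * (1 - (1 - 1 / (N + 1 : ℝ)) ^ (N + 1)) + (1 - m) * (1 - 1 / (N + 1 : ℝ)) ^ N := by
  have h1 := mul_le_mul_of_nonneg_left (one_sub_inv_pow_le_exp_neg_one N) hm.1
  have h2 := mul_le_mul_of_nonneg_left (exp_neg_one_le_one_sub_inv_pow N) (sub_nonneg.2 hm.2)
  linarith

end Numerics

theorem stmt19_general (n : ℕ)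
    (F : (Fin n → ℝ) → ℝ) (gF : (Fin n → ℝ) → Fin n → ℝ)
    (hdiff : ∀ x : Fin n → ℝ, (∀ i, 0 ≤ x i ∧ x i ≤ 1) →
      HasFDerivAt F
        (LinearMap.toContinuousLinearMap
          (∑ i : Fin n, gF x i • (LinearMap.proj i : (Fin n → ℝ) →ₗ[ℝ] ℝ))) x)
    (m : ℝ) (hm : m ∈ Set.Icc (0 : ℝ) 1)
    (hnn : ∀ x : Fin n → ℝ, (∀ i, 0 ≤ x i ∧ x i ≤ 1) → 0 ≤ F x)
    (hmono : ∀ x y : Fin n → ℝ, (∀ i, 0 ≤ x i) → (∀ i, x i ≤ y i) → (∀ i, y i ≤ 1) →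
      m * F x ≤ F y)
    (hDR : ∀ x y : Fin n → ℝ, (∀ i, 0 ≤ x i ∧ x i ≤ 1) → (∀ i, 0 ≤ y i ∧ y i ≤ 1) →
      (∀ i, x i ≤ y i) → ∀ i, gF y i ≤ gF x i)
    (L : ℝ) (hL : 0 ≤ L)
    (hsmooth : ∀ x y : Fin n → ℝ, (∀ i, 0 ≤ x i ∧ x i ≤ 1) → (∀ i, 0 ≤ y i ∧ y i ≤ 1) →
      Real.sqrt (∑ i, (gF x i - gF y i) ^ 2) ≤ L * Real.sqrt (∑ i, (x i - y i) ^ 2))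
    (P : Set (Fin n → ℝ))
    (hPbox : ∀ p ∈ P, ∀ i, 0 ≤ p i ∧ p i ≤ 1)
    (D : ℝ) (hDbound : ∀ p ∈ P, Real.sqrt (∑ i, (p i) ^ 2) ≤ D)
    (K : ℕ) (hK : 1 ≤ K) (ε : ℝ) (hε : ε = 1 / (K : ℝ))
    (y s : ℕ → Fin n → ℝ)
    (hy0 : y 0 = fun _ => 0)
    (hstep : ∀ i < K, s i ∈ P ∧
      (∀ p ∈ P, (∑ j, p j * ((1 - y i j) * gF (y i) j))
        ≤ ∑ j, s i j * ((1 - y i j) * gF (y i) j)) ∧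
      y (i + 1) = fun j => y i j + ε * ((1 - y i j) * s i j))
    (o : Fin n → ℝ) (ho : o ∈ P) :
    (m * (1 - 1 / Real.exp 1) + (1 - m) * (1 / Real.exp 1)) * F o - ε * L * D ^ 2
      ≤ F (y K) := by
  obtain ⟨N, rfl⟩ : ∃ N, K = N + 1 := ⟨K - 1, by omega⟩
  rw [Nat.cast_succ] at hε
  have hε0 : 0 ≤ ε := by rw [hε]; positivity
  have hε1 : ε ≤ 1 := by rw [hε]; exact div_le_one_of_le₀ (by simp) (by positivity)
  have hF : HasGradientOn F gF (Icc 0 1) := fun x hx => hdiff x (mem_Icc_zero_one_iff.1 hx)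
  have hDR' : AntitoneOn gF (Icc 0 1) := fun x hx y hy hxy =>
    hDR x y (mem_Icc_zero_one_iff.1 hx) (mem_Icc_zero_one_iff.1 hy) hxy
  have hsmooth' : ∀ x ∈ Icc (0 : Fin n → ℝ) 1, ∀ y ∈ Icc (0 : Fin n → ℝ) 1,
      √(∑ i, (gF x i - gF y i) ^ 2) ≤ L * √(∑ i, (x i - y i) ^ 2) := fun x hx y hy =>
    hsmooth x y (mem_Icc_zero_one_iff.1 hx) (mem_Icc_zero_one_iff.1 hy)
  have hP : ∀ p ∈ P, p ∈ Icc 0 1 := fun p hp => mem_Icc_zero_one_iff.2 (hPbox p hp)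
  have hy : ∀ i < N + 1, y (i + 1) = y i + ε • ((1 - y i) * s i) := fun i hi => (hstep i hi).2.2
  have hiter := frankWolfe_iterate_bounds hε0 hε1 hy0 (fun i hi => hP _ (hstep i hi).1) hy
  have hrec := le_of_frankWolfe_recursion (f := fun i => F (y i)) (A := F o) hε0 hε1
    (by positivity : 0 ≤ ε ^ 2 * L * D ^ 2) (hnn _ (by simp [hy0]))
    (fun i hi => hy i hi ▸ frankWolfe_step hF hDR' hmono hL hsmooth' hε0 hε1
      (pow_nonneg (sub_nonneg.2 hε1) i) (pow_le_one₀ (sub_nonneg.2 hε1) (sub_le_self 1 hε0))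
      (hiter i hi.le).1 (hiter i hi.le).2 (hP _ (hstep i hi).1) (hP o ho)
      (hDbound _ (hstep i hi).1) ((hstep i hi).2.1 o ho)) (N + 1) le_rfl
  have hFo : 0 ≤ F o := hnn o (hPbox o ho)
  subst hε
  calc (m * (1 - 1 / Real.exp 1) + (1 - m) * (1 / Real.exp 1)) * F o - 1 / (N + 1) * L * D ^ 2
      ≤ (m * (1 - (1 - 1 / (N + 1 : ℝ)) ^ (N + 1)) + (1 - m) * (1 - 1 / (N + 1 : ℝ)) ^ N) * F o
          - 1 / (N + 1) * L * D ^ 2 :=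
        sub_le_sub_right (mul_le_mul_of_nonneg_right (frankWolfe_coeff_le N hm) hFo) _
    _ = _ := by rw [Nat.add_sub_cancel]; push_cast; field_simp
    _ ≤ F (y (N + 1)) := hrec

/-- guarantee of the Non-monotone Frank-Wolfe algorithm.  `F` is continuously
differentiable on `[0,1]ⁿ` with gradient `gF` (encoded via `HasFDerivAt` with the linear
functional `x ↦ Σᵢ gF x i · xᵢ`), non-negative, `m`-monotone, DR-submodular (antitone
gradient) and `L`-smooth (in the Euclidean norm).  `P` is a nonempty convex down-closed
subset of `[0,1]ⁿ` of Euclidean diameter at most `D`.  The iterates satisfy `y⁰ = 0` and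
`y^{i+1} = yⁱ + ε·(1 − yⁱ) ⊙ sⁱ`, where `sⁱ ∈ P` maximizes `x ↦ x · ((1 − yⁱ) ⊙ ∇F(yⁱ))`
over `P`.  Then for every `o ∈ P`,
`F(y^K) ≥ [m(1 − 1/e) + (1 − m)/e]·F(o) − εLD²`. -/
theorem stmt19 (n : ℕ) (hn : 1 ≤ n)
    (F : (Fin n → ℝ) → ℝ) (gF : (Fin n → ℝ) → Fin n → ℝ)
    (hdiff : ∀ x : Fin n → ℝ, (∀ i, 0 ≤ x i ∧ x i ≤ 1) →
      HasFDerivAt F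
        (LinearMap.toContinuousLinearMap
          (∑ i : Fin n, gF x i • (LinearMap.proj i : (Fin n → ℝ) →ₗ[ℝ] ℝ))) x)
    (m : ℝ) (hm : m ∈ Set.Icc (0 : ℝ) 1)
    (hnn : ∀ x : Fin n → ℝ, (∀ i, 0 ≤ x i ∧ x i ≤ 1) → 0 ≤ F x)
    (hmono : ∀ x y : Fin n → ℝ, (∀ i, 0 ≤ x i) → (∀ i, x i ≤ y i) → (∀ i, y i ≤ 1) →
      m * F x ≤ F y)
    (hDR : ∀ x y : Fin n → ℝ, (∀ i, 0 ≤ x i ∧ x i ≤ 1) → (∀ i, 0 ≤ y i ∧ y i ≤ 1) →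
      (∀ i, x i ≤ y i) → ∀ i, gF y i ≤ gF x i)
    (L : ℝ) (hL : 0 ≤ L)
    (hsmooth : ∀ x y : Fin n → ℝ, (∀ i, 0 ≤ x i ∧ x i ≤ 1) → (∀ i, 0 ≤ y i ∧ y i ≤ 1) →
      Real.sqrt (∑ i, (gF x i - gF y i) ^ 2) ≤ L * Real.sqrt (∑ i, (x i - y i) ^ 2))
    (P : Set (Fin n → ℝ)) (hPne : P.Nonempty) (hPconv : Convex ℝ P)
    (hPbox : ∀ p ∈ P, ∀ i, 0 ≤ p i ∧ p i ≤ 1)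
    (hPdown : ∀ p ∈ P, ∀ q : Fin n → ℝ, (∀ i, 0 ≤ q i) → (∀ i, q i ≤ p i) → q ∈ P)
    (D : ℝ) (hD : 0 ≤ D) (hDbound : ∀ p ∈ P, Real.sqrt (∑ i, (p i) ^ 2) ≤ D)
    (K : ℕ) (hK : 1 ≤ K) (ε : ℝ) (hε : ε = 1 / (K : ℝ))
    (y s : ℕ → Fin n → ℝ)
    (hy0 : y 0 = fun _ => 0)
    (hstep : ∀ i < K, s i ∈ P ∧
      (∀ p ∈ P, (∑ j, p j * ((1 - y i j) * gF (y i) j))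
        ≤ ∑ j, s i j * ((1 - y i j) * gF (y i) j)) ∧
      y (i + 1) = fun j => y i j + ε * ((1 - y i j) * s i j))
    (o : Fin n → ℝ) (ho : o ∈ P) :
    (m * (1 - 1 / Real.exp 1) + (1 - m) * (1 / Real.exp 1)) * F o - ε * L * D ^ 2
      ≤ F (y K) :=
  stmt19_general n F gF hdiff m hm hnn hmono hDR L hL hsmooth P hPbox D hDbound K hK ε hε y s hy0
    hstep o ho
end
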